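/- arXiv:1707.07115 — 9 statements merged into one kernel-verified Lean document; each statement's English description precedes it below -/
import Mathlib

section
/- Let $V \subset \mathbb{R}^n$ be a linear subspace such that for all orthogonal vectors $a, b \in V$ the componentwise product $a \diamond b$ (defined by $(a\diamond b)_i = a_i b_i$) again lies in $V$. Then $V$ admits an orthonormal basis $\{u_1,\dots,u_k\}$ such that for every $i \neq j$, the componentwise product $u_i \diamond u_j$ lies in $\mathbb{R} u_i \cup \mathbb{R} u_j$. -/
/-!
Fix a nonzero `u ∈ V` and let `d` be the component of `u ⋄ u / |u|²` orthogonal to `V`.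
Polarising `(a + b) ⋄ (a - b) ∈ V`, valid whenever `|a| = |b|`, gives `a ⋄ b ≡ ⟨a, b⟩ d (mod V)`
for all `a, b ∈ V`. If `dim V ≥ 2`, this forces multiplication by `d` to act on `V` as a scalar
`μ`, and `d ⋄ d = μ d`. Hence either `V` itself (when `d = 0`) or `W = V ⊕ ℝ e`, with `e = d / μ`
an idempotent unit of `W`, is closed under `⋄`. Such a subspace is spanned by indicator vectors
`g₁, …, gₘ` of disjoint sets. In the first case the normalised `gₜ` form the required basis. In
the second, `V = {x ∈ W : ⟨x, e⟩ = 0}` and `e = g₁ + ⋯ + gₘ`; there the Helmert-type vectors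
`|sₜ|² gₜ - |gₜ|² sₜ`, where `sₜ = g₁ + ⋯ + gₜ₋₁`, work, because each of them is constant on the
supports of the earlier ones.
-/

open Finset Submodule

variable {ι : Type*}

def IsSelfSaturated [Fintype ι] (V : Submodule ℝ (ι → ℝ)) : Prop :=
  ∀ a ∈ V, ∀ b ∈ V, a ⬝ᵥ b = 0 → a * b ∈ V

def IsAdaptedBasis [Fintype ι] (V : Submodule ℝ (ι → ℝ)) (B : Finset (ι → ℝ)) : Prop :=
  span ℝ (B : Set (ι → ℝ)) = V ∧ (∀ u ∈ B, u ⬝ᵥ u = 1) ∧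
    (B : Set (ι → ℝ)).Pairwise fun u v => u ⬝ᵥ v = 0 ∧ (u * v ∈ ℝ ∙ u ∨ u * v ∈ ℝ ∙ v)

lemma mul_eq_smul_of_mem_span {s : Set (ι → ℝ)} {e : ι → ℝ} {c : ℝ}
    (h : ∀ x ∈ s, x * e = c • x) {y : ι → ℝ} (hy : y ∈ span ℝ s) : y * e = c • y := by
  simpa using LinearMap.eqOn_span (f := LinearMap.mulRight ℝ e) (g := LinearMap.lsmul ℝ _ c)
    (fun x hx => by simpa using h x hx) hy

lemma mul_eq_zero_of_mem_span {s : Set (ι → ℝ)} {e : ι → ℝ} (h : ∀ x ∈ s, x * e = 0)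
    {y : ι → ℝ} (hy : y ∈ span ℝ s) : y * e = 0 := by
  simpa using mul_eq_smul_of_mem_span (c := 0) (by simpa using h) hy

lemma mul_sum_eq_self_of_mem_span {G : Finset (ι → ℝ)} (hidem : ∀ g ∈ G, IsIdempotentElem g)
    (horth : (G : Set (ι → ℝ)).Pairwise (· * · = 0)) {y : ι → ℝ}
    (hy : y ∈ span ℝ (G : Set (ι → ℝ))) : y * ∑ h ∈ G, h = y := by
  refine (mul_eq_smul_of_mem_span (fun g hg => ?_) hy).trans (one_smul ℝ y)
  rw [one_smul, mul_sum, sum_eq_single_of_mem g hg fun h hh hne => horth hg hh hne.symm]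
  exact hidem g hg

section CoordClass

variable {W : Submodule ℝ (ι → ℝ)}

def coordClass (W : Submodule ℝ (ι → ℝ)) (i : ι) : Set ι := {j | ∀ x ∈ W, x j = x i}

lemma mem_coordClass_self (i : ι) : i ∈ coordClass W i := fun _ _ => rfl

lemma coordClass_eq_of_mem {i j : ι} (h : j ∈ coordClass W i) :
    coordClass W j = coordClass W i := by
  ext k
  exact ⟨fun hk x hx => (hk x hx).trans (h x hx), fun hk x hx => (hk x hx).trans (h x hx).symm⟩

lemma mul_indicator_coordClass {x : ι → ℝ} (hx : x ∈ W) (i : ι) :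
    x * (coordClass W i).indicator 1 = x i • (coordClass W i).indicator 1 := by
  ext k
  by_cases hk : k ∈ coordClass W i
  · simp [hk, hk x hx]
  · simp [hk]

lemma mul_prod_mem (hW : ∀ x ∈ W, ∀ y ∈ W, x * y ∈ W) {e : ι → ℝ} (he : e ∈ W)
    {κ : Type*} (s : Finset κ) {f : κ → ι → ℝ} (hf : ∀ j ∈ s, f j ∈ W) : e * ∏ j ∈ s, f j ∈ W := by
  classical
  induction s using Finset.induction_on with
  | empty => simpa using he
  | insert j s hj ih =>
    rw [prod_insert hj, mul_left_comm]
    exact hW _ (hf j (mem_insert_self j s)) _ (ih fun k hk => hf k (mem_insert_of_mem hk))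

lemma exists_mem_apply_eq_one_apply_eq_zero {e : ι → ℝ} (hW : ∀ x ∈ W, ∀ y ∈ W, x * y ∈ W)
    (he : e ∈ W) {i j : ι} (hei : e i = 1) (hj : j ∉ coordClass W i) :
    ∃ f ∈ W, f i = 1 ∧ f j = 0 := by
  obtain ⟨x, hx, hxj⟩ : ∃ x ∈ W, x j ≠ x i := by simpa [coordClass] using hj
  refine ⟨(x i - x j)⁻¹ • (x * e - x j • e), W.smul_mem _ (W.sub_mem (hW x hx e he)
    (W.smul_mem _ he)), ?_, by simp⟩
  simp [hei, sub_ne_zero.mpr hxj.symm]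

lemma indicator_coordClass_mul_eq_zero {i j : ι}
    (hne : (coordClass W i).indicator (1 : ι → ℝ) ≠ (coordClass W j).indicator 1) :
    (coordClass W i).indicator (1 : ι → ℝ) * (coordClass W j).indicator 1 = 0 := by
  ext k
  by_cases hki : k ∈ coordClass W i
  · by_cases hkj : k ∈ coordClass W j
    · exact (hne (by rw [← coordClass_eq_of_mem hki, coordClass_eq_of_mem hkj])).elim
    · simp [hkj]
  · simp [hki]

end CoordClass

variable [Fintype ι]

lemma mul_dotProduct_assoc (x y z : ι → ℝ) : (x * y) ⬝ᵥ z = x ⬝ᵥ (y * z) :=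
  Finset.sum_congr rfl fun _ _ => mul_assoc _ _ _

lemma dotProduct_eq_zero_of_mul_eq_zero {x y : ι → ℝ} (h : x * y = 0) : x ⬝ᵥ y = 0 := by
  rw [show x ⬝ᵥ y = ∑ i, (x * y) i from rfl, h]
  simp

lemma exists_smul_dotProduct_self_eq_one {v : ι → ℝ} (hv : v ≠ 0) :
    ∃ c : ℝ, c ≠ 0 ∧ (c • v) ⬝ᵥ (c • v) = 1 := by
  have hpos : 0 < v ⬝ᵥ v := lt_of_le_of_ne (Finset.sum_nonneg fun i _ => mul_self_nonneg (v i))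
    (Ne.symm (dotProduct_self_eq_zero.not.mpr hv))
  refine ⟨(√(v ⬝ᵥ v))⁻¹, by positivity, ?_⟩
  rw [smul_dotProduct, dotProduct_smul, smul_eq_mul, smul_eq_mul, ← mul_assoc, ← sq, inv_pow,
    Real.sq_sqrt hpos.le, inv_mul_cancel₀ hpos.ne']

lemma eq_zero_of_mem_of_forall_dotProduct_eq_zero {V : Submodule ℝ (ι → ℝ)} {c : ι → ℝ} (hc : c ∈ V)
    (h : ∀ v ∈ V, v ⬝ᵥ c = 0) : c = 0 :=
  dotProduct_self_eq_zero.mp (h c hc)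

lemma exists_mem_forall_sub_dotProduct_eq_zero (V : Submodule ℝ (ι → ℝ)) (x : ι → ℝ) :
    ∃ p ∈ V, ∀ v ∈ V, (x - p) ⬝ᵥ v = 0 := by
  let K := V.comap (WithLp.linearEquiv 2 ℝ (ι → ℝ)).toLinearMap
  obtain ⟨p, hp, q, hq, hx⟩ := K.exists_add_mem_mem_orthogonal (WithLp.toLp 2 x)
  refine ⟨WithLp.ofLp p, hp, fun v hv => ?_⟩
  have : x - WithLp.ofLp p = WithLp.ofLp q := by
    rw [← WithLp.ofLp_toLp 2 x, hx]; simp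
  rw [this, dotProduct_comm]
  simpa [EuclideanSpace.inner_eq_star_dotProduct] using
    (K.mem_orthogonal' q).mp hq (WithLp.toLp 2 v) (by simpa [K] using hv)

namespace IsAdaptedBasis

variable {V : Submodule ℝ (ι → ℝ)} {B : Finset (ι → ℝ)}

lemma bot : IsAdaptedBasis (⊥ : Submodule ℝ (ι → ℝ)) ∅ := by
  simp [IsAdaptedBasis]

lemma exists_sup (hB : IsAdaptedBasis V B) {h : ι → ℝ} (hh : h ≠ 0)
    (horth : ∀ v ∈ V, h ⬝ᵥ v = 0) (hmul : ∀ v ∈ V, h * v ∈ ℝ ∙ h ∨ h * v ∈ ℝ ∙ v) :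
    ∃ B', IsAdaptedBasis (ℝ ∙ h ⊔ V) B' := by
  classical
  obtain ⟨c, hc, hc1⟩ := exists_smul_dotProduct_self_eq_one hh
  obtain ⟨hspan, hunit, hpair⟩ := hB
  have hcspan : ℝ ∙ (c • h) = ℝ ∙ h := span_singleton_smul_eq (isUnit_iff_ne_zero.mpr hc) h
  refine ⟨insert (c • h) B, ?_, ?_, ?_⟩
  · rw [coe_insert, span_insert, hspan, hcspan]
  · intro u hu
    rcases mem_insert.mp hu with rfl | hu
    exacts [hc1, hunit u hu]
  · rw [coe_insert, Set.pairwise_insert]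
    refine ⟨hpair, fun v hv _ => ?_⟩
    have hvV : v ∈ V := hspan ▸ subset_span hv
    have hdot : (c • h) ⬝ᵥ v = 0 := by rw [smul_dotProduct, horth v hvV, smul_zero]
    have hmul' : (c • h) * v ∈ ℝ ∙ (c • h) ∨ (c • h) * v ∈ ℝ ∙ v := by
      rw [smul_mul_assoc, hcspan]
      exact (hmul v hvV).imp (smul_mem _ c) (smul_mem _ c)
    exact ⟨⟨hdot, hmul'⟩, (dotProduct_comm v _).trans hdot, mul_comm v (c • h) ▸ hmul'.symm⟩

lemma exists_span_singleton (b : ι → ℝ) : ∃ B, IsAdaptedBasis (ℝ ∙ b) B := by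
  rcases eq_or_ne b 0 with rfl | hb
  · exact ⟨∅, by simpa using bot⟩
  · simpa using bot.exists_sup hb (by simp) (by simp)

end IsAdaptedBasis

lemma mul_sub_smul_mem_of_forall_mul_self {V : Submodule ℝ (ι → ℝ)} {d : ι → ℝ}
    (h : ∀ a ∈ V, a * a - (a ⬝ᵥ a) • d ∈ V) {a b : ι → ℝ} (ha : a ∈ V) (hb : b ∈ V) :
    a * b - (a ⬝ᵥ b) • d ∈ V := by
  have key : a * b - (a ⬝ᵥ b) • d = (2 : ℝ)⁻¹ • (((a + b) * (a + b) - ((a + b) ⬝ᵥ (a + b)) • d)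
      - (a * a - (a ⬝ᵥ a) • d) - (b * b - (b ⬝ᵥ b) • d)) := by
    simp only [add_dotProduct, dotProduct_add, dotProduct_comm b a]
    ext i
    simp only [Pi.sub_apply, Pi.mul_apply, Pi.smul_apply, Pi.add_apply, smul_eq_mul]
    ring
  rw [key]
  exact V.smul_mem _ (V.sub_mem (V.sub_mem (h _ (V.add_mem ha hb)) (h a ha)) (h b hb))

namespace IsSelfSaturated

variable {V : Submodule ℝ (ι → ℝ)}

lemma mul_self_sub_mul_self_mem (hV : IsSelfSaturated V) {a b : ι → ℝ} (ha : a ∈ V) (hb : b ∈ V)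
    (hab : a ⬝ᵥ a = b ⬝ᵥ b) : a * a - b * b ∈ V := by
  rw [mul_self_sub_mul_self]
  refine hV _ (V.add_mem ha hb) _ (V.sub_mem ha hb) ?_
  rw [add_dotProduct, dotProduct_sub, dotProduct_sub, hab, dotProduct_comm b a]
  ring

lemma smul_mul_self_sub_smul_mul_self_mem (hV : IsSelfSaturated V) {a b : ι → ℝ} (ha : a ∈ V)
    (hb : b ∈ V) : (b ⬝ᵥ b) • (a * a) - (a ⬝ᵥ a) • (b * b) ∈ V := by
  have hsq : ∀ v : ι → ℝ, √(v ⬝ᵥ v) * √(v ⬝ᵥ v) = v ⬝ᵥ v := fun v =>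
    Real.mul_self_sqrt (Finset.sum_nonneg fun i _ => mul_self_nonneg (v i))
  have key := hV.mul_self_sub_mul_self_mem (V.smul_mem √(b ⬝ᵥ b) ha) (V.smul_mem √(a ⬝ᵥ a) hb)
    (by simp only [smul_dotProduct, dotProduct_smul, smul_eq_mul, ← mul_assoc, hsq]; ring)
  simpa only [smul_mul_smul_comm, hsq] using key

lemma exists_forall_mul_sub_smul_mem (hV : IsSelfSaturated V) {u : ι → ℝ} (hu : u ∈ V)
    (hu0 : u ≠ 0) : ∃ d : ι → ℝ, (∀ v ∈ V, d ⬝ᵥ v = 0) ∧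
      ∀ a ∈ V, ∀ b ∈ V, a * b - (a ⬝ᵥ b) • d ∈ V := by
  set q := u ⬝ᵥ u
  have hq : q ≠ 0 := dotProduct_self_eq_zero.not.mpr hu0
  obtain ⟨p, hp, hperp⟩ := exists_mem_forall_sub_dotProduct_eq_zero V (q⁻¹ • (u * u))
  refine ⟨_, hperp, fun a ha b hb => mul_sub_smul_mem_of_forall_mul_self (fun a ha => ?_) ha hb⟩
  have key : a * a - (a ⬝ᵥ a) • (q⁻¹ • (u * u) - p) =
      q⁻¹ • (q • (a * a) - (a ⬝ᵥ a) • (u * u)) + (a ⬝ᵥ a) • p := by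
    ext i
    simp only [Pi.sub_apply, Pi.add_apply, Pi.mul_apply, Pi.smul_apply, smul_eq_mul]
    field_simp
    ring
  rw [key]
  exact V.add_mem (V.smul_mem _ (hV.smul_mul_self_sub_smul_mul_self_mem ha hu)) (V.smul_mem _ hp)

end IsSelfSaturated

section Defect

variable {V : Submodule ℝ (ι → ℝ)} {d : ι → ℝ}

lemma IsSelfSaturated.mul_mem_of_forall_exists_orthogonal (hV : IsSelfSaturated V)
    (hd : ∀ v ∈ V, d ⬝ᵥ v = 0) (hdef : ∀ a ∈ V, ∀ b ∈ V, a * b - (a ⬝ᵥ b) • d ∈ V)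
    (hperp : ∀ b ∈ V, ∃ a ∈ V, a ≠ 0 ∧ a ⬝ᵥ b = 0) {b : ι → ℝ} (hb : b ∈ V) : b * d ∈ V := by
  obtain ⟨a, ha, ha0, hab⟩ := hperp b hb
  set q := a ⬝ᵥ a
  have hq : q ≠ 0 := dotProduct_self_eq_zero.not.mpr ha0
  have hX := hdef a ha (a * b) (hV a ha b hb hab)
  have hY := hdef b hb (a * a - q • d) (hdef a ha a ha)
  have hdot : b ⬝ᵥ (a * a - q • d) = a ⬝ᵥ (a * b) := by
    rw [dotProduct_sub, dotProduct_smul, dotProduct_comm b d, hd b hb, smul_zero, sub_zero,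
      dotProduct_comm, mul_dotProduct_assoc]
  rw [hdot] at hY
  have key : b * d = q⁻¹ • ((a * (a * b) - (a ⬝ᵥ (a * b)) • d) -
      (b * (a * a - q • d) - (a ⬝ᵥ (a * b)) • d)) := by
    ext i
    simp only [Pi.sub_apply, Pi.mul_apply, Pi.smul_apply, smul_eq_mul]
    field_simp
    ring
  rw [key]
  exact V.smul_mem _ (V.sub_mem hX hY)

lemma smul_sub_smul_mul_self_mem (hdef : ∀ a ∈ V, ∀ b ∈ V, a * b - (a ⬝ᵥ b) • d ∈ V)
    (hmul : ∀ b ∈ V, b * d ∈ V) {a b : ι → ℝ} (ha : a ∈ V) (hb : b ∈ V) :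
    (a ⬝ᵥ (b * d)) • d - (a ⬝ᵥ b) • (d * d) ∈ V := by
  convert V.sub_mem (hmul _ (hdef a ha b hb)) (hdef a ha _ (hmul b hb)) using 1
  ext i
  simp only [Pi.sub_apply, Pi.mul_apply, Pi.smul_apply, smul_eq_mul]
  ring

lemma eq_zero_of_smul_mem (hd : ∀ v ∈ V, d ⬝ᵥ v = 0) (hd0 : d ≠ 0) {t : ℝ} (ht : t • d ∈ V) :
    t = 0 :=
  (smul_eq_zero.mp (eq_zero_of_mem_of_forall_dotProduct_eq_zero ht fun v hv => by
    rw [dotProduct_smul, dotProduct_comm, hd v hv, smul_zero])).resolve_right hd0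

lemma exists_mul_eq_smul_of_forall_mul_sub_smul_mem (hd : ∀ v ∈ V, d ⬝ᵥ v = 0)
    (hdef : ∀ a ∈ V, ∀ b ∈ V, a * b - (a ⬝ᵥ b) • d ∈ V) (hmul : ∀ b ∈ V, b * d ∈ V)
    (hd0 : d ≠ 0) {u : ι → ℝ} (hu : u ∈ V) (hu0 : u ≠ 0) :
    ∃ μ : ℝ, (∀ b ∈ V, b * d = μ • b) ∧ d * d = μ • d := by
  set μ := u ⬝ᵥ (u * d) / (u ⬝ᵥ u)
  have hq : u ⬝ᵥ u ≠ 0 := dotProduct_self_eq_zero.not.mpr hu0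
  have hdd : d * d - μ • d ∈ V := by
    convert V.smul_mem (-(u ⬝ᵥ u)⁻¹) (smul_sub_smul_mul_self_mem hdef hmul hu hu) using 1
    ext i
    simp only [Pi.sub_apply, Pi.mul_apply, Pi.smul_apply, smul_eq_mul, μ]
    field_simp
    ring
  have hform : ∀ a ∈ V, ∀ b ∈ V, a ⬝ᵥ (b * d) = μ * (a ⬝ᵥ b) := by
    intro a ha b hb
    have key : (a ⬝ᵥ (b * d) - μ * (a ⬝ᵥ b)) • d =
        ((a ⬝ᵥ (b * d)) • d - (a ⬝ᵥ b) • (d * d)) + (a ⬝ᵥ b) • (d * d - μ • d) := by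
      rw [smul_sub, smul_smul, sub_smul, mul_comm μ]
      abel
    have := eq_zero_of_smul_mem hd hd0
      (key ▸ V.add_mem (smul_sub_smul_mul_self_mem hdef hmul ha hb) (V.smul_mem (a ⬝ᵥ b) hdd))
    linarith
  have hvd : ∀ b ∈ V, b * d = μ • b := fun b hb =>
    sub_eq_zero.mp <| eq_zero_of_mem_of_forall_dotProduct_eq_zero
      (V.sub_mem (hmul b hb) (V.smul_mem μ hb)) fun v hv => by
        rw [dotProduct_sub, dotProduct_smul, hform v hv b hb, smul_eq_mul, sub_self]
  refine ⟨μ, hvd, sub_eq_zero.mp <| eq_zero_of_mem_of_forall_dotProduct_eq_zero hdd fun v hv => ?_⟩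
  rw [dotProduct_sub, dotProduct_smul, ← mul_dotProduct_assoc, hvd v hv, smul_dotProduct,
    dotProduct_comm v d, hd v hv, smul_zero, sub_zero]

end Defect

section Atoms

variable {W : Submodule ℝ (ι → ℝ)}

/-- The indicator is `e * ∏ f j`, where `e i = 1` and `f j` separates `i` from `j`; the product
lies in `W`, so it takes the value `1` on the whole class of `i`. -/
lemma indicator_coordClass_mem (hW : ∀ x ∈ W, ∀ y ∈ W, x * y ∈ W) {i : ι}
    (hi : ∃ x ∈ W, x i ≠ 0) : (coordClass W i).indicator 1 ∈ W := by
  classical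
  obtain ⟨y, hy, hyi⟩ := hi
  set e := (y i)⁻¹ • y
  have he : e ∈ W := W.smul_mem _ hy
  have hei : e i = 1 := by simp [e, hyi]
  choose! f hfW hfi hfj using fun j (hj : j ∉ coordClass W i) =>
    exists_mem_apply_eq_one_apply_eq_zero hW he hei hj
  set s := univ.filter (· ∉ coordClass W i)
  have hprod := mul_prod_mem hW he s (f := f) fun j hj => hfW j (mem_filter.mp hj).2
  convert hprod using 1
  ext k
  by_cases hk : k ∈ coordClass W i
  · rw [Set.indicator_of_mem hk, hk _ hprod, Pi.mul_apply, Finset.prod_apply, hei, one_mul,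
      prod_eq_one fun j hj => hfi j (mem_filter.mp hj).2, Pi.one_apply]
  · rw [Set.indicator_of_notMem hk, Pi.mul_apply, Finset.prod_apply,
      prod_eq_zero (f := fun j => f j k) (by simpa [s] using hk) (hfj k hk), mul_zero]

theorem exists_orthogonal_idempotents_span_eq (hW : ∀ x ∈ W, ∀ y ∈ W, x * y ∈ W) :
    ∃ G : Finset (ι → ℝ), (∀ g ∈ G, IsIdempotentElem g) ∧ 0 ∉ G ∧
      (G : Set (ι → ℝ)).Pairwise (· * · = 0) ∧ span ℝ (G : Set (ι → ℝ)) = W := by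
  classical
  set S := univ.filter fun i => ∃ x ∈ W, x i ≠ 0
  refine ⟨S.image fun i => (coordClass W i).indicator 1, ?_, ?_, ?_, ?_⟩
  · simp only [mem_image]
    rintro _ ⟨i, -, rfl⟩
    ext k
    by_cases hk : k ∈ coordClass W i <;> simp [hk]
  · simp only [mem_image, not_exists, not_and]
    intro i _ h
    simpa [mem_coordClass_self] using congrFun h i
  · simp only [coe_image]
    rintro _ ⟨i, -, rfl⟩ _ ⟨j, -, rfl⟩ hne
    exact indicator_coordClass_mul_eq_zero hne
  refine le_antisymm (span_le.mpr ?_) fun x hx => ?_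
  · simp only [coe_image, Set.image_subset_iff]
    exact fun i hi => indicator_coordClass_mem hW (mem_filter.mp hi).2
  have hsum : x = ∑ g ∈ S.image fun i => (coordClass W i).indicator 1, x * g := by
    ext k
    rw [Finset.sum_apply]
    by_cases hk : ∃ y ∈ W, y k ≠ 0
    · rw [sum_eq_single_of_mem _ (mem_image_of_mem _ (mem_filter.mpr ⟨mem_univ k, hk⟩))]
      · simp [mem_coordClass_self]
      · simp only [mem_image]
        rintro _ ⟨i, -, rfl⟩ hne
        have hki : k ∉ coordClass W i := fun hki => hne (by rw [coordClass_eq_of_mem hki])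
        simp [hki]
    · push Not at hk
      simp [hk x hx]
  rw [hsum]
  refine sum_mem fun g hg => ?_
  obtain ⟨i, -, rfl⟩ := mem_image.mp hg
  rw [mul_indicator_coordClass hx]
  exact smul_mem _ _ (subset_span hg)

end Atoms

lemma span_singleton_inf_ker_self (g : ι → ℝ) :
    (ℝ ∙ g) ⊓ LinearMap.ker (dotProductBilin ℝ ℝ g) = ⊥ := by
  rw [eq_bot_iff]
  rintro x ⟨hx, hxg⟩
  obtain ⟨a, rfl⟩ := mem_span_singleton.mp hx
  simp_all

lemma sup_inf_ker_add_eq {U : Submodule ℝ (ι → ℝ)} {g e : ι → ℝ} (hg : ∀ y ∈ U, g ⬝ᵥ y = 0)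
    (he : e ∈ U) (he0 : e ≠ 0) :
    (ℝ ∙ g ⊔ U) ⊓ LinearMap.ker (dotProductBilin ℝ ℝ (g + e)) =
      ℝ ∙ ((e ⬝ᵥ e) • g - (g ⬝ᵥ g) • e) ⊔ (U ⊓ LinearMap.ker (dotProductBilin ℝ ℝ e)) := by
  have hge : g ⬝ᵥ e = 0 := hg e he
  have hM : e ⬝ᵥ e ≠ 0 := dotProduct_self_eq_zero.not.mpr he0
  apply le_antisymm
  · rintro x ⟨hx, hxk⟩
    obtain ⟨_, hag, y, hy, rfl⟩ := mem_sup.mp hx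
    obtain ⟨a, rfl⟩ := mem_span_singleton.mp hag
    have hey : e ⬝ᵥ y = -(a * (g ⬝ᵥ g)) := by
      simp only [SetLike.mem_coe, LinearMap.mem_ker, dotProductBilin_apply_apply, add_dotProduct,
        dotProduct_add, dotProduct_smul, hg y hy, dotProduct_comm e g, hge, smul_eq_mul] at hxk
      linarith
    refine mem_sup.mpr ⟨(a / (e ⬝ᵥ e)) • ((e ⬝ᵥ e) • g - (g ⬝ᵥ g) • e),
      smul_mem _ _ (mem_span_singleton_self _), y + (a * (g ⬝ᵥ g) / (e ⬝ᵥ e)) • e,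
      ⟨U.add_mem hy (U.smul_mem _ he), ?_⟩, ?_⟩
    · simp only [SetLike.mem_coe, LinearMap.mem_ker, dotProductBilin_apply_apply, dotProduct_add,
        dotProduct_smul, hey, smul_eq_mul]
      field_simp
      ring
    · ext i
      simp only [Pi.add_apply, Pi.sub_apply, Pi.smul_apply, smul_eq_mul]
      field_simp
      ring
  refine sup_le ?_ fun y ⟨hy, hye⟩ => ⟨mem_sup_right hy, ?_⟩
  · refine (span_singleton_le_iff_mem _ _).mpr ⟨sub_mem (mem_sup_left (smul_mem _ _
      (mem_span_singleton_self g))) (mem_sup_right (U.smul_mem _ he)), ?_⟩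
    simp only [SetLike.mem_coe, LinearMap.mem_ker, dotProductBilin_apply_apply, add_dotProduct,
      dotProduct_sub, dotProduct_smul, hge, dotProduct_comm e g, smul_eq_mul]
    ring
  · simp only [SetLike.mem_coe, LinearMap.mem_ker, dotProductBilin_apply_apply,
      add_dotProduct, hg y hy] at hye ⊢
    simpa using hye

theorem exists_isAdaptedBasis_span (G : Finset (ι → ℝ)) (hidem : ∀ g ∈ G, IsIdempotentElem g)
    (h0 : (0 : ι → ℝ) ∉ G) (horth : (G : Set (ι → ℝ)).Pairwise (· * · = 0)) :
    ∃ B, IsAdaptedBasis (span ℝ (G : Set (ι → ℝ))) B := by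
  classical
  induction G using Finset.induction_on with
  | empty => exact ⟨∅, by simpa using IsAdaptedBasis.bot⟩
  | insert g s hgs ih =>
    rw [coe_insert, Set.pairwise_insert] at horth
    obtain ⟨B, hB⟩ := ih (fun x hx => hidem x (mem_insert_of_mem hx))
      (fun h => h0 (mem_insert_of_mem h)) horth.1
    have hgy : ∀ y ∈ span ℝ (s : Set (ι → ℝ)), g * y = 0 := fun y hy => by
      rw [mul_comm]
      exact mul_eq_zero_of_mem_span (fun x hx => (horth.2 x hx fun h => hgs (h ▸ hx)).2) hy
    rw [coe_insert, span_insert]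
    exact hB.exists_sup (fun h => h0 (h ▸ mem_insert_self g s))
      (fun v hv => dotProduct_eq_zero_of_mul_eq_zero (hgy v hv))
      (fun v hv => Or.inl (by rw [hgy v hv]; exact zero_mem _))

theorem exists_isAdaptedBasis_span_inf_ker_sum (G : Finset (ι → ℝ))
    (hidem : ∀ g ∈ G, IsIdempotentElem g) (h0 : (0 : ι → ℝ) ∉ G)
    (horth : (G : Set (ι → ℝ)).Pairwise (· * · = 0)) :
    ∃ B, IsAdaptedBasis
      (span ℝ (G : Set (ι → ℝ)) ⊓ LinearMap.ker (dotProductBilin ℝ ℝ (∑ g ∈ G, g))) B := by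
  classical
  induction G using Finset.induction_on with
  | empty => exact ⟨∅, by simpa using IsAdaptedBasis.bot⟩
  | insert g s hgs ih =>
    rw [coe_insert, Set.pairwise_insert] at horth
    obtain ⟨B, hB⟩ := ih (fun x hx => hidem x (mem_insert_of_mem hx))
      (fun h => h0 (mem_insert_of_mem h)) horth.1
    rcases s.eq_empty_or_nonempty with rfl | ⟨x₀, hx₀⟩
    · exact ⟨∅, by simpa [span_singleton_inf_ker_self] using IsAdaptedBasis.bot⟩
    have hsg : ∀ y ∈ span ℝ (s : Set (ι → ℝ)), y * g = 0 := fun y =>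
      mul_eq_zero_of_mem_span fun x hx => (horth.2 x hx fun h => hgs (h ▸ hx)).2
    have hse : ∀ y ∈ span ℝ (s : Set (ι → ℝ)), y * ∑ x ∈ s, x = y := fun y =>
      mul_sum_eq_self_of_mem_span (fun x hx => hidem x (mem_insert_of_mem hx)) horth.1
    set e := ∑ x ∈ s, x
    have he : e ∈ span ℝ (s : Set (ι → ℝ)) := sum_mem fun x hx => subset_span hx
    have he0 : e ≠ 0 := fun h => by
      have hx₀0 : x₀ = 0 := by simpa [h] using (hse x₀ (subset_span hx₀)).symm
      exact h0 (mem_insert_of_mem (hx₀0 ▸ hx₀))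
    have hg0 : g ≠ 0 := fun h => h0 (h ▸ mem_insert_self g s)
    have hgU : ∀ y ∈ span ℝ (s : Set (ι → ℝ)), g ⬝ᵥ y = 0 := fun y hy => by
      rw [dotProduct_comm]
      exact dotProduct_eq_zero_of_mul_eq_zero (hsg y hy)
    rw [sum_insert hgs, coe_insert, span_insert, sup_inf_ker_add_eq hgU he he0]
    refine hB.exists_sup ?_ ?_ ?_
    · intro h
      have := congrArg (g ⬝ᵥ ·) h
      simp [dotProduct_sub, dotProduct_smul, hgU e he, he0, hg0] at this
    · rintro v ⟨hv, hve⟩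
      simp only [SetLike.mem_coe, LinearMap.mem_ker, dotProductBilin_apply_apply] at hve
      rw [sub_dotProduct, smul_dotProduct, smul_dotProduct, hgU v hv, hve, smul_zero, smul_zero,
        sub_zero]
    · rintro v ⟨hv, -⟩
      right
      rw [sub_mul, smul_mul_assoc, smul_mul_assoc, mul_comm g, hsg v hv, mul_comm e, hse v hv,
        smul_zero, zero_sub, ← neg_smul]
      exact smul_mem _ _ (mem_span_singleton_self v)

theorem exists_isAdaptedBasis_of_mul_mem {W : Submodule ℝ (ι → ℝ)}
    (hW : ∀ x ∈ W, ∀ y ∈ W, x * y ∈ W) : ∃ B, IsAdaptedBasis W B := by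
  obtain ⟨G, hidem, h0, horth, rfl⟩ := exists_orthogonal_idempotents_span_eq hW
  exact exists_isAdaptedBasis_span G hidem h0 horth

theorem exists_isAdaptedBasis_inf_ker {W : Submodule ℝ (ι → ℝ)} {e : ι → ℝ}
    (hW : ∀ x ∈ W, ∀ y ∈ W, x * y ∈ W) (heW : e ∈ W) (he : ∀ x ∈ W, x * e = x) :
    ∃ B, IsAdaptedBasis (W ⊓ LinearMap.ker (dotProductBilin ℝ ℝ e)) B := by
  obtain ⟨G, hidem, h0, horth, rfl⟩ := exists_orthogonal_idempotents_span_eq hW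
  have hsum : ∑ g ∈ G, g = e := calc
    ∑ g ∈ G, g = (∑ g ∈ G, g) * e := (he _ (sum_mem fun g hg => subset_span hg)).symm
    _ = e * ∑ g ∈ G, g := mul_comm _ _
    _ = e := mul_sum_eq_self_of_mem_span hidem horth heW
  rw [← hsum]
  exact exists_isAdaptedBasis_span_inf_ker_sum G hidem h0 horth

theorem exists_isAdaptedBasis_of_mul_mem_sup {V : Submodule ℝ (ι → ℝ)} {e : ι → ℝ} (he0 : e ≠ 0)
    (he : e * e = e) (hVe : ∀ v ∈ V, v * e = v) (heV : ∀ v ∈ V, e ⬝ᵥ v = 0)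
    (hmul : ∀ a ∈ V, ∀ b ∈ V, a * b ∈ V ⊔ ℝ ∙ e) : ∃ B, IsAdaptedBasis V B := by
  have hWe : ∀ x ∈ V ⊔ ℝ ∙ e, x * e = x := by
    intro x hx
    obtain ⟨v, hv, _, hy, rfl⟩ := mem_sup.mp hx
    obtain ⟨t, rfl⟩ := mem_span_singleton.mp hy
    rw [add_mul, smul_mul_assoc, he, hVe v hv]
  have hW : ∀ x ∈ V ⊔ ℝ ∙ e, ∀ y ∈ V ⊔ ℝ ∙ e, x * y ∈ V ⊔ ℝ ∙ e := by
    intro x hx y hy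
    obtain ⟨v, hv, _, hx', rfl⟩ := mem_sup.mp hx
    obtain ⟨s, rfl⟩ := mem_span_singleton.mp hx'
    obtain ⟨w, hw, _, hy', rfl⟩ := mem_sup.mp hy
    obtain ⟨t, rfl⟩ := mem_span_singleton.mp hy'
    have key : (v + s • e) * (w + t • e) = v * w + t • v + s • w + (s * t) • e := by
      rw [add_mul, mul_add, mul_add, mul_smul_comm, hVe v hv, smul_mul_assoc, mul_comm e w,
        hVe w hw, smul_mul_smul_comm, he]
      abel
    rw [key]
    refine add_mem (add_mem (add_mem (hmul v hv w hw) ?_) ?_) ?_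
    · exact smul_mem _ _ (mem_sup_left hv)
    · exact smul_mem _ _ (mem_sup_left hw)
    · exact smul_mem _ _ (mem_sup_right (mem_span_singleton_self e))
  have hV : V = (V ⊔ ℝ ∙ e) ⊓ LinearMap.ker (dotProductBilin ℝ ℝ e) := by
    refine le_antisymm (fun v hv => ⟨mem_sup_left hv, heV v hv⟩) ?_
    rintro x ⟨hx, hxe⟩
    obtain ⟨v, hv, _, hy, rfl⟩ := mem_sup.mp hx
    obtain ⟨t, rfl⟩ := mem_span_singleton.mp hy
    simp only [SetLike.mem_coe, LinearMap.mem_ker, dotProductBilin_apply_apply, dotProduct_add,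
      heV v hv, dotProduct_smul, smul_eq_mul, zero_add, mul_eq_zero,
      dotProduct_self_eq_zero, he0, or_false] at hxe
    simpa [hxe] using hv
  rw [hV]
  exact exists_isAdaptedBasis_inf_ker hW (mem_sup_right (mem_span_singleton_self e)) hWe

lemma eq_span_singleton_of_forall_dotProduct_ne_zero {V : Submodule ℝ (ι → ℝ)} {b : ι → ℝ}
    (hb : b ∈ V) (h : ∀ a ∈ V, a ≠ 0 → a ⬝ᵥ b ≠ 0) : V = ℝ ∙ b := by
  refine le_antisymm (fun x hx => ?_) ((span_singleton_le_iff_mem _ _).mpr hb)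
  set c := x ⬝ᵥ b / (b ⬝ᵥ b)
  have hy : x - c • b = 0 := by
    by_contra hne
    refine h _ (V.sub_mem hx (V.smul_mem c hb)) hne ?_
    rw [sub_dotProduct, smul_dotProduct, smul_eq_mul, div_mul_cancel_of_imp, sub_self]
    intro hbb
    rw [dotProduct_self_eq_zero.mp hbb, dotProduct_zero]
  exact mem_span_singleton.mpr ⟨c, (sub_eq_zero.mp hy).symm⟩

theorem IsSelfSaturated.exists_isAdaptedBasis {V : Submodule ℝ (ι → ℝ)} (hV : IsSelfSaturated V) :
    ∃ B, IsAdaptedBasis V B := by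
  by_cases hperp : ∀ b ∈ V, ∃ a ∈ V, a ≠ 0 ∧ a ⬝ᵥ b = 0
  swap
  · push Not at hperp
    obtain ⟨b, hb, hb'⟩ := hperp
    rw [eq_span_singleton_of_forall_dotProduct_ne_zero hb hb']
    exact IsAdaptedBasis.exists_span_singleton b
  obtain ⟨u, hu, hu0, -⟩ := hperp 0 V.zero_mem
  obtain ⟨d, hd, hdef⟩ := hV.exists_forall_mul_sub_smul_mem hu hu0
  rcases eq_or_ne d 0 with rfl | hd0
  · exact exists_isAdaptedBasis_of_mul_mem fun a ha b hb => by simpa using hdef a ha b hb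
  obtain ⟨μ, hvd, hdd⟩ := exists_mul_eq_smul_of_forall_mul_sub_smul_mem hd hdef
    (fun b hb => hV.mul_mem_of_forall_exists_orthogonal hd hdef hperp hb) hd0 hu hu0
  have hμ : μ ≠ 0 := by
    rintro rfl
    exact hd0 (dotProduct_self_eq_zero.mp (dotProduct_eq_zero_of_mul_eq_zero (by simpa using hdd)))
  refine exists_isAdaptedBasis_of_mul_mem_sup (e := μ⁻¹ • d) (smul_ne_zero (inv_ne_zero hμ) hd0)
    ?_ (fun v hv => ?_) (fun v hv => ?_) fun a ha b hb => ?_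
  · rw [smul_mul_smul_comm, hdd, smul_smul, mul_assoc, inv_mul_cancel₀ hμ, mul_one]
  · rw [mul_smul_comm, hvd v hv, smul_smul, inv_mul_cancel₀ hμ, one_smul]
  · rw [smul_dotProduct, hd v hv, smul_zero]
  · have key : a * b = (a * b - (a ⬝ᵥ b) • d) + ((a ⬝ᵥ b) * μ) • (μ⁻¹ • d) := by
      rw [smul_smul, mul_assoc, mul_inv_cancel₀ hμ, mul_one, sub_add_cancel]
    rw [key]
    exact add_mem (mem_sup_left (hdef a ha b hb)) (mem_sup_right (smul_mem _ _
      (mem_span_singleton_self _)))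

lemma IsAdaptedBasis.exists_fin {V : Submodule ℝ (ι → ℝ)} {B : Finset (ι → ℝ)}
    (hB : IsAdaptedBasis V B) :
    ∃ (k : ℕ) (u : Fin k → (ι → ℝ)), (∀ i, u i ∈ V) ∧ span ℝ (Set.range u) = V ∧
      (∀ i j, u i ⬝ᵥ u j = if i = j then (1 : ℝ) else 0) ∧
      ∀ i j, i ≠ j → (∃ c : ℝ, u i * u j = c • u i) ∨ (∃ c : ℝ, u i * u j = c • u j) := by
  obtain ⟨hspan, hunit, hpair⟩ := hB
  set u : Fin B.card → (ι → ℝ) := fun i => B.equivFin.symm i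
  have hu : ∀ i, u i ∈ B := fun i => (B.equivFin.symm i).2
  have hinj : Function.Injective u := Subtype.val_injective.comp B.equivFin.symm.injective
  have hrange : Set.range u = B :=
    (B.equivFin.symm.surjective.range_comp Subtype.val).trans Subtype.range_coe
  refine ⟨B.card, u, fun i => hspan ▸ subset_span (hu i), by rw [hrange, hspan], fun i j => ?_,
    fun i j hij => ?_⟩
  · split_ifs with hij
    · exact hij ▸ hunit _ (hu i)
    · exact (hpair (hu i) (hu j) (hinj.ne hij)).1
  · simpa only [mem_span_singleton, eq_comm] using (hpair (hu i) (hu j) (hinj.ne hij)).2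

/-- Lemma 4.1 (selfsatur2): a self-saturated subspace of ℝⁿ admits an orthonormal
basis `u` such that `u i ⋄ u j ∈ ℝ u i ∪ ℝ u j` for `i ≠ j`. -/
theorem stmt_0 (n : ℕ) (V : Submodule ℝ (Fin n → ℝ))
    (hV : ∀ a ∈ V, ∀ b ∈ V, (∑ k, a k * b k) = 0 → a * b ∈ V) :
    ∃ (k : ℕ) (u : Fin k → (Fin n → ℝ)),
      (∀ i, u i ∈ V) ∧
      Submodule.span ℝ (Set.range u) = V ∧
      (∀ i j, (∑ l, u i l * u j l) = if i = j then (1:ℝ) else 0) ∧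
      (∀ i j, i ≠ j → (∃ c : ℝ, u i * u j = c • u i) ∨ (∃ c : ℝ, u i * u j = c • u j)) := by
  obtain ⟨B, hB⟩ := IsSelfSaturated.exists_isAdaptedBasis hV
  exact hB.exists_fin
end

section
/- Let $U \subseteq \mathbb{R}^n$ be a linear subspace closed under the componentwise product $\diamond$, containing the all-ones vector, and suppose $U \neq \mathbb{R}\cdot(1,\dots,1)$. Let $\alpha \in U$ be a nonzero vector with the maximal number of zero entries among nonzero vectors of $U$. Then for every $\beta \in U$ and all indices $i, j$ with $\alpha_i \neq 0$ and $\alpha_j \neq 0$, one has $\beta_i = \beta_j$. -/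
/-!
If `β` took two different values `β i ≠ β j` on the support of `α`, then
`γ = α ⋄ (β - β j • 1)` would lie in `U`, vanish wherever `α` does and also at `j`, yet be
nonzero at `i`: a nonzero vector of `U` with more zeros than `α`.
-/

open Finset

variable {ι R : Type*} [CommRing R]

theorem card_filter_eq_zero_lt [Fintype ι] [DecidableEq R] {a g : ι → R} {j : ι}
    (hg : ∀ k, a k = 0 → g k = 0) (hgj : g j = 0) (haj : a j ≠ 0) : #{k | a k = 0} < #{k | g k = 0} := by
  have hsub : ({k | a k = 0} : Finset ι) ⊆ ({k | g k = 0} : Finset ι) := fun k hk ↦ by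
    simp only [mem_filter, mem_univ, true_and] at hk ⊢
    exact hg k hk
  exact card_lt_card <| (ssubset_iff_of_subset hsub).2 ⟨j, by simp [hgj], by simp [haj]⟩

theorem mul_sub_const_mem {U : Submodule R (ι → R)} (h1 : (fun _ => (1 : R)) ∈ U)
    (hmul : ∀ a ∈ U, ∀ b ∈ U, a * b ∈ U) {a b : ι → R} (ha : a ∈ U) (hb : b ∈ U) (c : R) :
    a * (b - c • fun _ => (1 : R)) ∈ U :=
  hmul a ha _ (U.sub_mem hb (U.smul_mem c h1))

theorem stmt_2_general (n : ℕ) (U : Submodule ℝ (Fin n → ℝ))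
    (h1 : (fun _ => (1:ℝ)) ∈ U)
    (hmul : ∀ a ∈ U, ∀ b ∈ U, a * b ∈ U)
    (α : Fin n → ℝ) (hαU : α ∈ U)
    (hmax : ∀ β ∈ U, β ≠ (0 : Fin n → ℝ) →
      (Finset.univ.filter fun i => β i = 0).card ≤ (Finset.univ.filter fun i => α i = 0).card) :
    ∀ β ∈ U, ∀ i j : Fin n, α i ≠ 0 → α j ≠ 0 → β i = β j := by
  intro β hβ i j hi hj
  by_contra hneq
  set γ := α * (β - β j • fun _ => (1 : ℝ))
  have hγi : γ i ≠ 0 := by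
    simpa [γ] using And.intro hi (sub_ne_zero.2 hneq)
  have hγ0 : γ ≠ 0 := fun h ↦ hγi (by simp [h])
  have hlt : #{k | α k = 0} < #{k | γ k = 0} :=
    card_filter_eq_zero_lt (fun k hk ↦ by simp [γ, hk]) (by simp [γ]) hj
  exact (hmax γ (mul_sub_const_mem h1 hmul hαU hβ _) hγ0).not_gt hlt

/-- Key step in Lemma 2.5: if `U` is closed under `⋄`, contains the all-ones vector, and
`U ≠ ℝ·(1,…,1)`, and `α ∈ U` is a nonzero vector with a maximal number of zero entries,
then every `β ∈ U` is constant on the support of `α`. -/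
theorem stmt_2 (n : ℕ) (U : Submodule ℝ (Fin n → ℝ))
    (h1 : (fun _ => (1:ℝ)) ∈ U)
    (hmul : ∀ a ∈ U, ∀ b ∈ U, a * b ∈ U)
    (hne : U ≠ Submodule.span ℝ {fun _ : Fin n => (1:ℝ)})
    (α : Fin n → ℝ) (hαU : α ∈ U) (hα0 : α ≠ 0)
    (hmax : ∀ β ∈ U, β ≠ (0 : Fin n → ℝ) →
      (Finset.univ.filter fun i => β i = 0).card ≤ (Finset.univ.filter fun i => α i = 0).card) :
    ∀ β ∈ U, ∀ i j : Fin n, α i ≠ 0 → α j ≠ 0 → β i = β j :=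
  stmt_2_general n U h1 hmul α hαU hmax
end

section
/- Let $\alpha_1, \dots, \alpha_m$ be nonzero real numbers, let $T$ be an $(m-1) \times m$ real matrix of rank $m-1$ whose rows $t^j$ satisfy $\sum_{i=1}^m \alpha_i t_i^j = 0$. Then the symmetric matrix $T \operatorname{diag}(\alpha_1,\dots,\alpha_m) T^t$ is positive definite if and only if either all $\alpha_i > 0$, or exactly one $\alpha_j < 0$ and $\sum_{i=1}^m \alpha_i < 0$. -/
/-!
The rows of `T` lie in the hyperplane `α^⊥ = {v | ∑ αᵢ vᵢ = 0}` and span a space of its dimension,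
so `Tᵗ` maps `ℝ^{m-1}` isomorphically onto `α^⊥`; since `xᵗ (T diag(α) Tᵗ) x = ∑ αᵢ vᵢ²` with
`v = Tᵗ x`, the matrix is positive definite iff the diagonal form `∑ αᵢ vᵢ²` is on `α^⊥`.

If `αⱼ` is the only negative weight and `∑ αᵢ < 0`, weighted Cauchy–Schwarz over `i ≠ j` gives
`(αⱼ vⱼ)² = (∑_{i≠j} αᵢ vᵢ)² ≤ (∑_{i≠j} αᵢ)(∑_{i≠j} αᵢ vᵢ²) < -αⱼ ∑_{i≠j} αᵢ vᵢ²` on `α^⊥`.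
Otherwise `α^⊥` contains a nonzero vector of nonpositive value: `αₖ eⱼ - αⱼ eₖ` if `αⱼ, αₖ < 0`,
and `αⱼ 𝟙 - (∑ αᵢ) eⱼ`, of value `αⱼ (∑ αᵢ) (∑_{i≠j} αᵢ)`, if `αⱼ < 0 ≤ ∑ αᵢ`.
-/

open Matrix

namespace Matrix

theorem dotProduct_mul_mul_transpose_mulVec {R m n : Type*} [CommSemiring R] [Fintype m]
    [Fintype n] (T : Matrix m n R) (M : Matrix n n R) (x : m → R) :
    x ⬝ᵥ (T * M * Tᵀ) *ᵥ x = Tᵀ *ᵥ x ⬝ᵥ M *ᵥ (Tᵀ *ᵥ x) := by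
  rw [← mulVec_mulVec, ← mulVec_mulVec, dotProduct_mulVec, mulVec_transpose]

theorem dotProduct_diagonal_mulVec {R n : Type*} [CommSemiring R] [Fintype n] [DecidableEq n]
    (α v : n → R) : v ⬝ᵥ diagonal α *ᵥ v = ∑ i, α i * v i ^ 2 := by
  simp only [dotProduct, mulVec_diagonal]
  exact Finset.sum_congr rfl fun i _ => by ring

theorem posDef_mul_mul_transpose_iff {m n : Type*} [Fintype m] [Fintype n]
    {T : Matrix m n ℝ} {M : Matrix n n ℝ} (hM : M.IsHermitian)
    (hT : Function.Injective Tᵀ.mulVec) :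
    (T * M * Tᵀ).PosDef ↔ ∀ v ∈ LinearMap.range Tᵀ.mulVecLin, v ≠ 0 → 0 < v ⬝ᵥ M *ᵥ v := by
  have hherm : (T * M * Tᵀ).IsHermitian := by
    simpa [conjTranspose_eq_transpose_of_trivial] using isHermitian_mul_mul_conjTranspose T hM
  simp only [posDef_iff_dotProduct_mulVec, hherm, true_and, star_trivial,
    dotProduct_mul_mul_transpose_mulVec, LinearMap.mem_range, mulVecLin_apply]
  constructor
  · rintro h _ ⟨x, rfl⟩ hx
    exact h fun h0 => hx (by rw [h0, mulVec_zero])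
  · intro h x hx
    exact h _ ⟨x, rfl⟩ fun h0 => hx (hT (h0.trans (mulVec_zero _).symm))

variable {K m n : Type*} [Field K] [Fintype m] [Fintype n]

theorem mulVec_transpose_injective_of_rank_eq (T : Matrix m n K)
    (hrank : T.rank = Fintype.card m) : Function.Injective Tᵀ.mulVec := by
  have h := LinearMap.finrank_range_add_finrank_ker Tᵀ.mulVecLin
  rwa [← Matrix.rank, rank_transpose, hrank, Module.finrank_fintype_fun_eq_card, add_eq_left,
    Submodule.finrank_eq_zero, LinearMap.ker_eq_bot] at h

theorem range_mulVecLin_transpose_eq_ker [DecidableEq n] (T : Matrix m n K) {α : n → K}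
    (hα : α ≠ 0) (hTα : T *ᵥ α = 0) (hrank : T.rank + 1 = Fintype.card n) :
    LinearMap.range Tᵀ.mulVecLin = LinearMap.ker (dotProductEquiv K n α) := by
  refine Submodule.eq_of_le_of_finrank_eq ?_ ?_
  · rintro _ ⟨x, rfl⟩
    simp only [LinearMap.mem_ker, dotProductEquiv_apply_apply, mulVecLin_apply, mulVec_transpose]
    rw [dotProduct_comm, ← dotProduct_mulVec, hTα, dotProduct_zero]
  · have hker := Module.Dual.finrank_ker_add_one_of_ne_zero
      ((dotProductEquiv K n).map_ne_zero_iff.mpr hα)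
    rw [Module.finrank_fintype_fun_eq_card, ← hrank] at hker
    rw [← Matrix.rank, rank_transpose]
    omega

end Matrix

section DiagFormPosOnPerp

variable {ι : Type*} [Fintype ι] {α : ι → ℝ}

def DiagFormPosOnPerp (α : ι → ℝ) : Prop :=
  ∀ v : ι → ℝ, ∑ i, α i * v i = 0 → v ≠ 0 → 0 < ∑ i, α i * v i ^ 2

theorem DiagFormPosOnPerp.of_forall_pos (hα : ∀ i, 0 < α i) : DiagFormPosOnPerp α := by
  intro v _ hv
  obtain ⟨i, hi⟩ := Function.ne_iff.mp hv
  have hvi : v i ≠ 0 := hi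
  exact Finset.sum_pos' (fun i _ => by have := hα i; positivity)
    ⟨i, Finset.mem_univ i, by have := hα i; positivity⟩

theorem DiagFormPosOnPerp.of_neg_of_sum_neg {j : ι} (hj : α j < 0) (hpos : ∀ i ≠ j, 0 < α i)
    (hsum : ∑ i, α i < 0) : DiagFormPosOnPerp α := by
  classical
  intro v hv hv0
  set s : Finset ι := {j}ᶜ
  have hs : ∀ i ∈ s, 0 < α i := fun i hi => hpos i (by simpa [s] using hi)
  have hQ_nonneg : ∀ i ∈ s, 0 ≤ α i * v i ^ 2 := fun i hi => by have := hs i hi; positivity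
  rw [Fintype.sum_eq_add_sum_compl j] at hsum hv ⊢
  have hCS : (∑ i ∈ s, α i * v i) ^ 2 ≤ (∑ i ∈ s, α i) * ∑ i ∈ s, α i * v i ^ 2 :=
    Finset.sum_sq_le_sum_mul_sum_of_sq_le_mul s (fun i hi => (hs i hi).le) hQ_nonneg
      (fun i _ => (by ring : _ = _).le)
  have hQ_pos : 0 < ∑ i ∈ s, α i * v i ^ 2 := by
    refine (Finset.sum_nonneg hQ_nonneg).lt_of_ne fun hQ => hv0 ?_
    have hvs : ∀ i ∈ s, v i = 0 := fun i hi => by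
      simpa [(hs i hi).ne'] using (Finset.sum_eq_zero_iff_of_nonneg hQ_nonneg).mp hQ.symm i hi
    have hvj : v j = 0 := by
      rw [Finset.sum_eq_zero fun i hi => by rw [hvs i hi, mul_zero], add_zero] at hv
      simpa [hj.ne] using hv
    funext i
    by_cases hij : i = j
    · rw [hij, hvj]; rfl
    · exact hvs i (by simpa [s] using hij)
  have hP : ∑ i ∈ s, α i * v i = -(α j * v j) := by linarith
  have hS : ∑ i ∈ s, α i < -α j := by linarith
  have key : (α j * v j) ^ 2 < -α j * ∑ i ∈ s, α i * v i ^ 2 := by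
    rw [hP, neg_sq] at hCS
    exact hCS.trans_lt (mul_lt_mul_of_pos_right hS hQ_pos)
  nlinarith

theorem not_diagFormPosOnPerp_of_two_neg {j k : ι} (hjk : j ≠ k) (hj : α j < 0) (hk : α k < 0) :
    ¬ DiagFormPosOnPerp α := by
  classical
  intro h
  set v : ι → ℝ := fun i => if i = j then α k else if i = k then -α j else 0
  have hform : ∀ f : ℝ → ℝ, f 0 = 0 → ∑ i, α i * f (v i) = α j * f (α k) + α k * f (-α j) := by
    intro f hf
    rw [Fintype.sum_eq_add j k hjk fun i ⟨hij, hik⟩ => by simp [v, hij, hik, hf]]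
    simp [v, hjk.symm]
  have := h v ((hform id rfl).trans (by simp only [id]; ring))
    (Function.ne_iff.mpr ⟨j, by simp [v, hk.ne]⟩)
  rw [hform (· ^ 2) (zero_pow two_ne_zero)] at this
  nlinarith [mul_pos_of_neg_of_neg hj hk]

theorem not_diagFormPosOnPerp_of_neg_of_sum_nonneg {j : ι} (hj : α j < 0)
    (hsum : 0 ≤ ∑ i, α i) : ¬ DiagFormPosOnPerp α := by
  classical
  intro h
  set σ := ∑ i, α i
  have hσ : σ = α j + ∑ i ∈ {j}ᶜ, α i := Fintype.sum_eq_add_sum_compl j α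
  set v : ι → ℝ := fun i => if i = j then α j - σ else α j
  have hform : ∀ f : ℝ → ℝ, ∑ i, α i * f (v i) = α j * f (α j - σ) + (σ - α j) * f (α j) := by
    intro f
    rw [Fintype.sum_eq_add_sum_compl j, Finset.sum_congr rfl fun i hi => by
      rw [show v i = α j from if_neg (by simpa using hi)], ← Finset.sum_mul]
    simp [v, hσ]
  have := h v ((hform id).trans (by simp only [id]; ring))
    (Function.ne_iff.mpr ⟨j, by simp [v]; linarith⟩)
  rw [hform (· ^ 2)] at this
  nlinarith [mul_nonneg (mul_nonneg hsum (neg_nonneg.mpr hj.le)) (sub_nonneg.mpr (hj.le.trans hsum))]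

theorem diagFormPosOnPerp_iff (hα : ∀ i, α i ≠ 0) :
    DiagFormPosOnPerp α ↔
      (∀ i, 0 < α i) ∨ ((∃ j, α j < 0 ∧ ∀ i, i ≠ j → 0 < α i) ∧ ∑ i, α i < 0) := by
  refine ⟨fun h => ?_, ?_⟩
  · by_contra hc
    push Not at hc
    obtain ⟨⟨j, hj⟩, hsum⟩ := hc
    replace hj : α j < 0 := hj.lt_of_ne (hα j)
    by_cases hk : ∃ k, k ≠ j ∧ α k < 0
    · obtain ⟨k, hkj, hk⟩ := hk
      exact not_diagFormPosOnPerp_of_two_neg hkj.symm hj hk h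
    · push Not at hk
      exact not_diagFormPosOnPerp_of_neg_of_sum_nonneg hj
        (hsum ⟨j, hj, fun i hi => (hk i hi).lt_of_ne' (hα i)⟩) h
  · rintro (hpos | ⟨⟨j, hj, hpos⟩, hsum⟩)
    · exact .of_forall_pos hpos
    · exact .of_neg_of_sum_neg hj hpos hsum

end DiagFormPosOnPerp

/-- Positive definiteness criterion for `T diag(α) Tᵗ` (here `m = n + 1`). -/
theorem stmt_4 (n : ℕ) (T : Matrix (Fin n) (Fin (n + 1)) ℝ)
    (α : Fin (n + 1) → ℝ) (hα : ∀ i, α i ≠ 0)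
    (hrank : T.rank = n)
    (hrow : ∀ j : Fin n, (∑ i, α i * T j i) = 0) :
    (T * diagonal α * Tᵀ).PosDef ↔
      ((∀ i, 0 < α i) ∨
        ((∃ j, α j < 0 ∧ ∀ i, i ≠ j → 0 < α i) ∧ (∑ i, α i) < 0)) := by
  have hTα : T *ᵥ α = 0 := funext fun j => by simpa [mulVec, dotProduct, mul_comm] using hrow j
  have hα0 : α ≠ 0 := fun h => hα 0 (by simp [h])
  have hinj := mulVec_transpose_injective_of_rank_eq T (by simpa using hrank)
  have hrange := range_mulVecLin_transpose_eq_ker T hα0 hTα (by simp [hrank])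
  rw [posDef_mul_mul_transpose_iff (isHermitian_diagonal α) hinj, hrange,
    ← diagFormPosOnPerp_iff hα]
  simp only [LinearMap.mem_ker, dotProductEquiv_apply_apply, dotProduct_diagonal_mulVec]
  rfl
end

section
/- Let $0 < z_1 < \dots < z_m$ and let $t_1, \dots, t_{m-1}$ be the roots of $\varphi(t) = \sum_{k=1}^m \frac{z_k}{z_k - t} = 0$. For $i = 1,\dots,m-1$ define $b^i \in \mathbb{R}^m$ with entries $b^i_k = \mu_i \frac{z_k}{z_k - t_i}$, where $\mu_i > 0$ is chosen so that $\sum_{k=1}^m (b^i_k)^2 = 1$. Then: (1) $\sum_{k=1}^m b^i_k = 0$ for all $i$; (2) for $i \neq j$, the componentwise product satisfies $b^i \diamond b^j = \frac{\mu_j t_i}{t_i - t_j} b^i + \frac{\mu_i t_j}{t_j - t_i} b^j$; (3) for $i \neq j$, $\sum_{k=1}^m b^i_k b^j_k = 0$, i.e., the $b^i$ form an orthonormal system. -/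
section

variable {K : Type*} [Field K]

theorem div_sub_mul_div_sub {z s u : K} (hs : z ≠ s) (hu : z ≠ u) (hsu : s ≠ u) :
    z / (z - s) * (z / (z - u)) = s / (s - u) * (z / (z - s)) + u / (u - s) * (z / (z - u)) := by
  have hzs : z - s ≠ 0 := sub_ne_zero.mpr hs
  have hzu : z - u ≠ 0 := sub_ne_zero.mpr hu
  have hsu' : s - u ≠ 0 := sub_ne_zero.mpr hsu
  have hus : u - s ≠ 0 := sub_ne_zero.mpr hsu.symm
  field_simp
  ring

theorem Finset.sum_mul_eq_zero_of_mul_eq_smul_add_smul {ι : Type*} [Fintype ι] {f g : ι → K}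
    {a c : K} (hf : ∑ k, f k = 0) (hg : ∑ k, g k = 0) (h : f * g = a • f + c • g) :
    ∑ k, f k * g k = 0 := by
  have := congrArg (fun v : ι → K => ∑ k, v k) h
  simpa only [Pi.mul_apply, Pi.add_apply, Pi.smul_apply, smul_eq_mul, Finset.sum_add_distrib,
    ← Finset.mul_sum, hf, hg, mul_zero, add_zero] using this

end

theorem stmt_8_general (m p : ℕ) (z : Fin m → ℝ)
    (t : Fin p → ℝ) (ht : Function.Injective t) (htz : ∀ i k, t i ≠ z k)
    (hroot : ∀ i, (∑ k, z k / (z k - t i)) = 0)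
    (μ : Fin p → ℝ)
    (b : Fin p → Fin m → ℝ) (hb : ∀ i k, b i k = μ i * (z k / (z k - t i))) :
    (∀ i, (∑ k, b i k) = 0) ∧
    (∀ i j, i ≠ j →
      b i * b j = (μ j * t i / (t i - t j)) • b i + (μ i * t j / (t j - t i)) • b j) ∧
    (∀ i j, i ≠ j → (∑ k, b i k * b j k) = 0) := by
  have hsum : ∀ i, ∑ k, b i k = 0 := fun i => by
    simp only [hb, ← Finset.mul_sum, hroot, mul_zero]
  have hprod : ∀ i j, i ≠ j →
      b i * b j = (μ j * t i / (t i - t j)) • b i + (μ i * t j / (t j - t i)) • b j := by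
    intro i j hij
    funext k
    have hpf := div_sub_mul_div_sub (htz i k).symm (htz j k).symm (ht.ne hij)
    simp only [Pi.mul_apply, Pi.add_apply, Pi.smul_apply, smul_eq_mul, hb]
    linear_combination μ i * μ j * hpf
  exact ⟨hsum, hprod, fun i j hij =>
    Finset.sum_mul_eq_zero_of_mul_eq_smul_add_smul (hsum i) (hsum j) (hprod i j hij)⟩

/-- Example 4.5: properties of the super-adapted system `b^i_k = μ_i z_k/(z_k - t_i)`. -/
theorem stmt_8 (m p : ℕ) (z : Fin m → ℝ) (hz : StrictMono z) (hzpos : ∀ k, 0 < z k)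
    (t : Fin p → ℝ) (ht : Function.Injective t) (htz : ∀ i k, t i ≠ z k)
    (hroot : ∀ i, (∑ k, z k / (z k - t i)) = 0)
    (μ : Fin p → ℝ) (hμ : ∀ i, 0 < μ i)
    (b : Fin p → Fin m → ℝ) (hb : ∀ i k, b i k = μ i * (z k / (z k - t i)))
    (hnorm : ∀ i, (∑ k, (b i k) ^ 2) = 1) :
    (∀ i, (∑ k, b i k) = 0) ∧
    (∀ i j, i ≠ j →
      b i * b j = (μ j * t i / (t i - t j)) • b i + (μ i * t j / (t j - t i)) • b j) ∧
    (∀ i j, i ≠ j → (∑ k, b i k * b j k) = 0) :=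
  stmt_8_general m p z t ht htz hroot μ b hb
end

section
/- Let $b^1, \dots, b^{m-1} \in \mathbb{R}^m$ be an orthonormal system of vectors each orthogonal to $(1,1,\dots,1)$, and suppose some $b^i$ has the property that $b^i \diamond b^j \in \mathbb{R} b^i$ for every $j \neq i$. If $b^i$ has exactly $r$ nonzero coordinates, then $r = 2$. (Equivalently: if $r \geq 3$, the vectors $b^j$, $j \neq i$, would be linearly dependent, a contradiction.) -/
/-!
Together with the all-ones vector, the `b j` form an orthogonal basis of `ℝᵐ`. If
`b i ⋄ b j ∈ ℝ b i`, then `b j` is constant on the support of `b i`; so for `k₁, k₂` in that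
support, `e_{k₁} - e_{k₂}` is orthogonal to `1` and to every `b j` with `j ≠ i`, hence equals
`(b i k₁ - b i k₂) • b i`. Since the coordinates of `b i` sum to zero we may take
`b i k₁ > 0 > b i k₂`, and then every other coordinate of `b i` must vanish.
-/

open Matrix

theorem exists_pos_and_neg_of_sum_eq_zero {n R : Type*} [Fintype n] [AddCommGroup R]
    [LinearOrder R] [IsOrderedAddMonoid R] {a : n → R} (hsum : ∑ k, a k = 0) (ha : a ≠ 0) :
    (∃ k, 0 < a k) ∧ ∃ k, a k < 0 := by
  obtain ⟨k, hk⟩ := Function.ne_iff.mp ha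
  refine ⟨?_, ?_⟩
  · simpa using Finset.exists_pos_of_sum_zero_of_exists_nonzero a hsum ⟨k, by simp, hk⟩
  · simpa using Finset.exists_pos_of_sum_zero_of_exists_nonzero (-a) (s := Finset.univ)
      (by simp [Finset.sum_neg_distrib, hsum]) ⟨k, by simp, by simpa using hk⟩

theorem apply_eq_of_mul_eq_smul {n R : Type*} [CommMonoidWithZero R] [IsLeftCancelMulZero R]
    {a w : n → R} {c : R} (h : a * w = c • a) {k : n} (hk : a k ≠ 0) : w k = c :=
  mul_left_cancel₀ hk <| by simpa [mul_comm c] using congrFun h k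

theorem single_sub_single_dotProduct {n R : Type*} [Fintype n] [DecidableEq n] [Ring R]
    (k₁ k₂ : n) (w : n → R) : (Pi.single k₁ 1 - Pi.single k₂ 1) ⬝ᵥ w = w k₁ - w k₂ := by
  rw [sub_dotProduct, single_dotProduct, single_dotProduct, one_mul, one_mul]

section OrthogonalFamily

variable {n ι R : Type*} [Fintype n] [Fintype ι] [Field R] [LinearOrder R] [IsStrictOrderedRing R]

theorem linearIndependent_of_pairwise_dotProduct_eq_zero {v : ι → n → R}
    (horth : Pairwise fun a b => v a ⬝ᵥ v b = 0) (hne : ∀ a, v a ≠ 0) :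
    LinearIndependent R v := by
  classical
  rw [Fintype.linearIndependent_iff]
  intro g hg a
  have hdot : g a * (v a ⬝ᵥ v a) = 0 :=
    calc g a * (v a ⬝ᵥ v a) = (∑ b, g b • v b) ⬝ᵥ v a := by
          rw [sum_dotProduct, Finset.sum_eq_single a (fun b _ hb => by
            rw [smul_dotProduct, horth hb, smul_zero]) (by simp), smul_dotProduct, smul_eq_mul]
      _ = 0 := by rw [hg, zero_dotProduct]
  exact (mul_eq_zero.mp hdot).resolve_right (mt dotProduct_self_eq_zero.mp (hne a))

theorem eq_zero_of_forall_dotProduct_eq_zero_of_pairwise_orthogonal {v : ι → n → R}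
    (horth : Pairwise fun a b => v a ⬝ᵥ v b = 0) (hne : ∀ a, v a ≠ 0)
    (hcard : Fintype.card n ≤ Fintype.card ι) {y : n → R} (hy : ∀ a, y ⬝ᵥ v a = 0) :
    y = 0 := by
  have hli := linearIndependent_of_pairwise_dotProduct_eq_zero horth hne
  have hspan : Submodule.span R (Set.range v) = ⊤ :=
    Submodule.eq_top_of_finrank_eq <| by
      rw [finrank_span_eq_card hli]
      simpa using le_antisymm (by simpa using hli.fintype_card_le_finrank) hcard
  obtain ⟨c, rfl⟩ := (Submodule.mem_span_range_iff_exists_fun R).mp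
    (hspan ▸ Submodule.mem_top : y ∈ Submodule.span R (Set.range v))
  refine dotProduct_self_eq_zero.mp ?_
  simp [dotProduct_sum, dotProduct_smul, hy]

theorem eq_zero_of_dotProduct_one_eq_zero_of_forall_dotProduct_eq_zero [Nonempty n]
    {b : ι → n → R} (horth : Pairwise fun j j' => b j ⬝ᵥ b j' = 0) (hne : ∀ j, b j ≠ 0)
    (hsum : ∀ j, ∑ k, b j k = 0) (hcard : Fintype.card n ≤ Fintype.card ι + 1) {y : n → R}
    (hy1 : y ⬝ᵥ 1 = 0) (hy : ∀ j, y ⬝ᵥ b j = 0) : y = 0 := by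
  refine eq_zero_of_forall_dotProduct_eq_zero_of_pairwise_orthogonal (v := Option.elim' 1 b)
    ?_ ?_ (by simpa using hcard) (Option.rec hy1 hy)
  · rintro (_ | j) (_ | j') hjj'
    · exact absurd rfl hjj'
    · simpa [dotProduct_comm, dotProduct_one] using hsum j'
    · simpa [dotProduct_one] using hsum j
    · exact horth (Option.some_injective _ |>.ne_iff.mp hjj')
  · rintro (_ | j)
    · exact one_ne_zero
    · exact hne j

theorem single_sub_single_eq_smul [Nonempty n] [DecidableEq n] [DecidableEq ι] {b : ι → n → R}
    (horth : ∀ j j', b j ⬝ᵥ b j' = if j = j' then 1 else 0) (hsum : ∀ j, ∑ k, b j k = 0)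
    (hcard : Fintype.card n ≤ Fintype.card ι + 1) {i : ι}
    (hmult : ∀ j, j ≠ i → ∃ c : R, b i * b j = c • b i) {k₁ k₂ : n} (hk₁ : b i k₁ ≠ 0)
    (hk₂ : b i k₂ ≠ 0) :
    Pi.single k₁ 1 - Pi.single k₂ 1 = (b i k₁ - b i k₂) • b i := by
  have hne : ∀ j, b j ≠ 0 := fun j hj => by simpa [hj] using horth j j
  rw [← sub_eq_zero]
  refine eq_zero_of_dotProduct_one_eq_zero_of_forall_dotProduct_eq_zero
    (fun j j' hjj' => by simpa [hjj'] using horth j j') hne hsum hcard ?_ fun j => ?_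
  · rw [sub_dotProduct, single_sub_single_dotProduct, smul_dotProduct, dotProduct_one, hsum i]
    simp
  rw [sub_dotProduct, single_sub_single_dotProduct, smul_dotProduct, horth]
  obtain rfl | hji := eq_or_ne j i
  · simp
  · obtain ⟨c, hc⟩ := hmult j hji
    simp [apply_eq_of_mul_eq_smul hc hk₁, apply_eq_of_mul_eq_smul hc hk₂, Ne.symm hji]

end OrthogonalFamily

/-- If `b¹,…,b^{m-1}` is an orthonormal system in `(1,…,1)^⊥ ⊂ ℝᵐ` and for some `i` the
vector `b^i ⋄ b^j` is a multiple of `b^i` for every `j ≠ i`, then `b^i` has exactly two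
nonzero coordinates. -/
theorem stmt_9 (m : ℕ) (b : Fin (m - 1) → Fin m → ℝ)
    (horth : ∀ i j, (∑ k, b i k * b j k) = if i = j then (1:ℝ) else 0)
    (hsum : ∀ i, (∑ k, b i k) = 0)
    (i : Fin (m - 1))
    (hmult : ∀ j, j ≠ i → ∃ c : ℝ, b i * b j = c • b i) :
    (Finset.univ.filter fun k => b i k ≠ 0).card = 2 := by
  have : NeZero m := ⟨by have := i.pos; omega⟩
  have hbi : b i ≠ 0 := fun h => by simpa [h] using horth i i
  obtain ⟨⟨k₁, hk₁⟩, ⟨k₂, hk₂⟩⟩ := exists_pos_and_neg_of_sum_eq_zero (hsum i) hbi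
  have hline := single_sub_single_eq_smul horth hsum (by simp only [Fintype.card_fin]; omega)
    hmult hk₁.ne' hk₂.ne
  have hk₁₂ : k₁ ≠ k₂ := fun h => (hk₁.trans (h ▸ hk₂)).false
  suffices hsupp : (Finset.univ.filter fun k => b i k ≠ 0) = {k₁, k₂} by
    rw [hsupp, Finset.card_pair hk₁₂]
  ext k
  simp only [Finset.mem_filter, Finset.mem_univ, true_and, Finset.mem_insert,
    Finset.mem_singleton]
  refine ⟨fun hk => ?_, by rintro (rfl | rfl) <;> simp [hk₁.ne', hk₂.ne]⟩
  by_contra! hk_ne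
  have hk_eval := congrFun hline k
  simp [hk_ne.1, hk_ne.2, sub_ne_zero.mpr (hk₂.trans hk₁).ne', hk] at hk_eval
end

section
/- Let $\mathcal{P}^1, \mathcal{P}^2$ be partitions of $\{1,\dots,m\}$ with $m_1$ and $m_2$ parts respectively, such that any part of $\mathcal{P}^1$ and any part of $\mathcal{P}^2$ intersect in at most one element, and such that $m_1 + m_2 = m + 1$. Let $T$ be a symmetric $m \times m$ real matrix with $(1,\dots,1)$ in its kernel such that $T_{ij} \neq 0$ with $i \neq j$ implies $i,j$ lie in a common part of $\mathcal{P}^1$ or a common part of $\mathcal{P}^2$. Then $T = T^{(1)} + T^{(2)}$ where each $T^{(a)}$ is a symmetric $m \times m$ matrix with $(1,\dots,1)$ in its kernel that agrees with $\mathcal{P}^a$ (i.e., $T^{(a)}_{ij} = 0$ whenever $i \neq j$ lie in different parts of $\mathcal{P}^a$). -/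
open Matrix

/-!
Subtracting from `B` the diagonal matrix of its row sums gives a matrix with the same
off-diagonal entries and zero row sums. This correction is additive and fixes `T`, so it
can be applied separately to the part of `T` supported on the first partition and to the
remainder, which the support hypothesis places on the second.
-/

namespace Matrix

variable {n R : Type*} [Fintype n] [DecidableEq n] [Ring R]

/-- `-B.withZeroRowSums` is the Laplacian of the weighted graph with weights `B`. -/
def withZeroRowSums (B : Matrix n n R) : Matrix n n R :=
  B - diagonal (B *ᵥ 1)

theorem withZeroRowSums_mulVec_one (B : Matrix n n R) : B.withZeroRowSums *ᵥ 1 = 0 := by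
  ext i
  simp [withZeroRowSums, sub_mulVec, mulVec_diagonal]

theorem withZeroRowSums_apply_of_ne (B : Matrix n n R) {i j : n} (hij : i ≠ j) :
    B.withZeroRowSums i j = B i j := by
  simp [withZeroRowSums, diagonal_apply_ne _ hij]

theorem IsSymm.withZeroRowSums {B : Matrix n n R} (hB : B.IsSymm) :
    B.withZeroRowSums.IsSymm :=
  hB.sub (isSymm_diagonal _)

theorem withZeroRowSums_add (B C : Matrix n n R) :
    (B + C).withZeroRowSums = B.withZeroRowSums + C.withZeroRowSums := by
  have hdiag : diagonal (B *ᵥ 1 + C *ᵥ 1) = diagonal (B *ᵥ 1) + diagonal (C *ᵥ 1) :=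
    (diagonal_add _ _).symm
  rw [withZeroRowSums, withZeroRowSums, withZeroRowSums, add_mulVec, hdiag]
  abel

theorem withZeroRowSums_eq_self {A : Matrix n n R} (hA : A *ᵥ 1 = 0) :
    A.withZeroRowSums = A := by
  simp [withZeroRowSums, hA]

omit [Fintype n] [DecidableEq n] in
theorem IsSymm.restrict {A : Matrix n n R} (hA : A.IsSymm) {p : n → n → Prop}
    [DecidableRel p] (hp : ∀ i j, p i j → p j i) :
    (of fun i j => if p i j then A i j else 0).IsSymm := by
  ext i j
  simp only [transpose_apply, of_apply, hA.apply i j, propext ⟨hp j i, hp i j⟩]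

theorem IsSymm.exists_add_of_support_le_sup {T : Matrix n n R} (hT : T.IsSymm)
    (hT_one : T *ᵥ 1 = 0) {p q : n → n → Prop} (hp : ∀ i j, p i j → p j i)
    (hsupp : ∀ i j, i ≠ j → T i j ≠ 0 → p i j ∨ q i j) :
    ∃ T₁ T₂ : Matrix n n R, T = T₁ + T₂ ∧ T₁.IsSymm ∧ T₂.IsSymm ∧
      T₁ *ᵥ 1 = 0 ∧ T₂ *ᵥ 1 = 0 ∧
      (∀ i j, i ≠ j → ¬ p i j → T₁ i j = 0) ∧ (∀ i j, i ≠ j → ¬ q i j → T₂ i j = 0) := by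
  classical
  set B : Matrix n n R := of fun i j => if p i j then T i j else 0
  have hB : B.IsSymm := hT.restrict hp
  refine ⟨B.withZeroRowSums, (T - B).withZeroRowSums, ?_, hB.withZeroRowSums,
    (hT.sub hB).withZeroRowSums, withZeroRowSums_mulVec_one _, withZeroRowSums_mulVec_one _,
    fun i j hij hpij => ?_, fun i j hij hqij => ?_⟩
  · rw [← withZeroRowSums_add, add_sub_cancel, withZeroRowSums_eq_self hT_one]
  · simp [withZeroRowSums_apply_of_ne _ hij, B, hpij]
  · rw [withZeroRowSums_apply_of_ne _ hij]
    by_cases hpij : p i j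
    · simp [B, hpij]
    · have hTij : T i j = 0 := by
        by_contra hne
        exact (hsupp i j hij hne).elim hpij hqij
      simp [B, hpij, hTij]

end Matrix

theorem stmt_12_general (m m1 m2 : ℕ)
    (S1 : Fin m1 → Finset (Fin m)) (S2 : Fin m2 → Finset (Fin m))
    (T : Matrix (Fin m) (Fin m) ℝ) (hTsym : T.IsSymm)
    (hTker : T *ᵥ (fun _ => (1:ℝ)) = 0)
    (hTsupp : ∀ i j, i ≠ j → T i j ≠ 0 →
      (∃ r, i ∈ S1 r ∧ j ∈ S1 r) ∨ (∃ r, i ∈ S2 r ∧ j ∈ S2 r)) :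
    ∃ T1 T2 : Matrix (Fin m) (Fin m) ℝ,
      T = T1 + T2 ∧
      T1.IsSymm ∧ T2.IsSymm ∧
      T1 *ᵥ (fun _ => (1:ℝ)) = 0 ∧ T2 *ᵥ (fun _ => (1:ℝ)) = 0 ∧
      (∀ i j, i ≠ j → (∀ r, ¬(i ∈ S1 r ∧ j ∈ S1 r)) → T1 i j = 0) ∧
      (∀ i j, i ≠ j → (∀ r, ¬(i ∈ S2 r ∧ j ∈ S2 r)) → T2 i j = 0) := by
  have hsame : ∀ i j, (∃ r, i ∈ S1 r ∧ j ∈ S1 r) → ∃ r, j ∈ S1 r ∧ i ∈ S1 r :=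
    fun _ _ ⟨r, hi, hj⟩ => ⟨r, hj, hi⟩
  obtain ⟨T1, T2, hT, hT1, hT2, hT1one, hT2one, hT1supp, hT2supp⟩ :=
    hTsym.exists_add_of_support_le_sup hTker hsame hTsupp
  exact ⟨T1, T2, hT, hT1, hT2, hT1one, hT2one,
    fun i j hij h => hT1supp i j hij (not_exists.mpr h),
    fun i j hij h => hT2supp i j hij (not_exists.mpr h)⟩

/-- Decomposition `T = T⁽¹⁾ + T⁽²⁾` of a symmetric matrix whose support agrees with a
pair of partitions meeting in at most one element. -/
theorem stmt_12 (m m1 m2 : ℕ) (hm : m1 + m2 = m + 1)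
    (S1 : Fin m1 → Finset (Fin m)) (S2 : Fin m2 → Finset (Fin m))
    (hS1ne : ∀ i, (S1 i).Nonempty) (hS2ne : ∀ i, (S2 i).Nonempty)
    (hS1disj : ∀ i i', i ≠ i' → Disjoint (S1 i) (S1 i'))
    (hS2disj : ∀ i i', i ≠ i' → Disjoint (S2 i) (S2 i'))
    (hS1cov : Finset.univ.biUnion S1 = Finset.univ)
    (hS2cov : Finset.univ.biUnion S2 = Finset.univ)
    (hint : ∀ (i1 : Fin m1) (i2 : Fin m2), (S1 i1 ∩ S2 i2).card ≤ 1)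
    (T : Matrix (Fin m) (Fin m) ℝ) (hTsym : T.IsSymm)
    (hTker : T *ᵥ (fun _ => (1:ℝ)) = 0)
    (hTsupp : ∀ i j, i ≠ j → T i j ≠ 0 →
      (∃ r, i ∈ S1 r ∧ j ∈ S1 r) ∨ (∃ r, i ∈ S2 r ∧ j ∈ S2 r)) :
    ∃ T1 T2 : Matrix (Fin m) (Fin m) ℝ,
      T = T1 + T2 ∧
      T1.IsSymm ∧ T2.IsSymm ∧
      T1 *ᵥ (fun _ => (1:ℝ)) = 0 ∧ T2 *ᵥ (fun _ => (1:ℝ)) = 0 ∧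
      (∀ i j, i ≠ j → (∀ r, ¬(i ∈ S1 r ∧ j ∈ S1 r)) → T1 i j = 0) ∧
      (∀ i j, i ≠ j → (∀ r, ¬(i ∈ S2 r ∧ j ∈ S2 r)) → T2 i j = 0) :=
  stmt_12_general m m1 m2 S1 S2 T hTsym hTker hTsupp
end

section
/- Let $\mathcal{P}^1 = \{S^1_i\}$, $\mathcal{P}^2 = \{S^2_j\}$ be partitions of $\{1,\dots,m\}$ such that each $S^1_i \cap S^2_j$ has at most one element, and let $\chi^a_i \in \mathbb{R}^m$ be the indicator vectors of the parts. Let $T$ be an $m \times m$ real matrix. Then $T$ satisfies $T(x \diamond y) = (Tx) \diamond y + x \diamond (Ty)$ for all $x \in \operatorname{Span}(\chi^1_1,\dots,\chi^1_{m_1})$ and $y \in \operatorname{Span}(\chi^2_1,\dots,\chi^2_{m_2})$ if and only if for all $i \neq j$ with $T_{ij} \neq 0$, the indices $i$ and $j$ belong to a common part of $\mathcal{P}^1$ or a common part of $\mathcal{P}^2$ — provided additionally that each row of $T$ sums to zero and $T$ is symmetric. -/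
/-!
When the rows of `T` sum to zero, the defect of the derivation identity is
`T(x ⋄ y) - (Tx) ⋄ y - x ⋄ (Ty) = (∑ⱼ Tᵢⱼ (xⱼ - xᵢ)(yⱼ - yᵢ))ᵢ`.
Vectors in the two spans are constant on the parts of the respective partitions, so under the
support condition every summand vanishes. Conversely, if `i` shares no part with `j` and `j` is
the unique element of `S¹ₐ ∩ S²_b`, then testing the identity on `χ¹ₐ, χ²_b` at the index `i`
leaves only `Tᵢⱼ = 0`.
-/

open Function Matrix Finset

variable {ι κ κ' R : Type*}

theorem Matrix.mulVec_mul_sub_mulVec_mul_sub_mul_mulVec [Fintype ι] [CommRing R]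
    {T : Matrix ι ι R} (hrow : T *ᵥ (fun _ => 1) = 0) (x y : ι → R) :
    T *ᵥ (x * y) - (T *ᵥ x) * y - x * (T *ᵥ y) =
      fun i => ∑ j, T i j * ((x j - x i) * (y j - y i)) := by
  funext i
  have hrow_i : ∑ j, T i j = 0 := by simpa [mulVec, dotProduct] using congrFun hrow i
  have expand : ∀ j, T i j * ((x j - x i) * (y j - y i)) =
      T i j * (x j * y j) - T i j * x j * y i - x i * (T i j * y j) + x i * y i * T i j := by
    intro j; ring
  simp only [expand, Finset.sum_add_distrib, Finset.sum_sub_distrib, ← Finset.sum_mul,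
    ← Finset.mul_sum, hrow_i, mul_zero, add_zero]
  simp [mulVec, dotProduct]

def constOnParts (R : Type*) [Semiring R] (S : κ → Finset ι) : Submodule R (ι → R) where
  carrier := {x | ∀ r, ∀ i ∈ S r, ∀ j ∈ S r, x i = x j}
  add_mem' hx hy r i hi j hj := by simp [hx r i hi j hj, hy r i hi j hj]
  zero_mem' := by simp
  smul_mem' c x hx r i hi j hj := by simp [hx r i hi j hj]

theorem span_indicator_le_constOnParts [DecidableEq ι] [Semiring R] {S : κ → Finset ι}
    (hS : Pairwise (Disjoint on S)) :
    Submodule.span R (Set.range fun r => fun k => if k ∈ S r then (1 : R) else 0) ≤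
      constOnParts R S := by
  rw [Submodule.span_le]
  rintro _ ⟨r', rfl⟩ r i hi j hj
  obtain rfl | hne := eq_or_ne r r'
  · simp [hi, hj]
  · simp [disjoint_left.1 (hS hne) hi, disjoint_left.1 (hS hne) hj]

theorem mulVec_mul_eq_of_mem_constOnParts [Fintype ι] [CommRing R] {T : Matrix ι ι R}
    {S₁ : κ → Finset ι} {S₂ : κ' → Finset ι} (hrow : T *ᵥ (fun _ => 1) = 0)
    (hsupp : ∀ i j, i ≠ j → T i j ≠ 0 →
      (∃ r, i ∈ S₁ r ∧ j ∈ S₁ r) ∨ (∃ r, i ∈ S₂ r ∧ j ∈ S₂ r))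
    {x y : ι → R} (hx : x ∈ constOnParts R S₁) (hy : y ∈ constOnParts R S₂) :
    T *ᵥ (x * y) = (T *ᵥ x) * y + x * (T *ᵥ y) := by
  rw [← sub_eq_zero, ← sub_sub, mulVec_mul_sub_mulVec_mul_sub_mul_mulVec hrow]
  funext i
  refine Finset.sum_eq_zero fun j _ => ?_
  by_cases hT : T i j = 0
  · simp [hT]
  obtain rfl | hij := eq_or_ne i j
  · simp
  rcases hsupp i j hij hT with ⟨r, hir, hjr⟩ | ⟨r, hir, hjr⟩
  · simp [hx r i hir j hjr]
  · simp [hy r i hir j hjr]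

theorem Matrix.apply_eq_zero_of_mulVec_indicator_mul [Fintype ι] [DecidableEq ι]
    [NonAssocSemiring R] {T : Matrix ι ι R} {A B : Finset ι} {i j : ι} (hAB : #(A ∩ B) ≤ 1)
    (hjA : j ∈ A) (hjB : j ∈ B) (hiA : i ∉ A) (hiB : i ∉ B)
    (h : T *ᵥ ((fun k => if k ∈ A then (1 : R) else 0) * fun k => if k ∈ B then 1 else 0) =
      (T *ᵥ fun k => if k ∈ A then 1 else 0) * (fun k => if k ∈ B then 1 else 0) +
        (fun k => if k ∈ A then 1 else 0) * (T *ᵥ fun k => if k ∈ B then 1 else 0)) :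
    T i j = 0 := by
  have hjAB : j ∈ A ∩ B := mem_inter.2 ⟨hjA, hjB⟩
  have hinter : A ∩ B = {j} :=
    eq_singleton_iff_unique_mem.2 ⟨hjAB, fun k hk => card_le_one.1 hAB k hk j hjAB⟩
  have hprod : ((fun k => if k ∈ A then (1 : R) else 0) * fun k => if k ∈ B then 1 else 0) =
      Pi.single j 1 := by
    funext k
    simp only [Pi.mul_apply, ite_zero_mul_ite_zero, one_mul, ← mem_inter, hinter, mem_singleton,
      Pi.single_apply]
  simpa [hprod, mulVec_single_one, hiA, hiB] using congrFun h i

theorem exists_mem_of_biUnion_eq_univ [Fintype ι] [Fintype κ] [DecidableEq ι]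
    {S : κ → Finset ι} (hS : univ.biUnion S = univ) (k : ι) : ∃ r, k ∈ S r := by
  simpa using eq_univ_iff_forall.1 hS k

theorem stmt_13_general (m m1 m2 : ℕ)
    (S1 : Fin m1 → Finset (Fin m)) (S2 : Fin m2 → Finset (Fin m))
    (hS1disj : ∀ i i', i ≠ i' → Disjoint (S1 i) (S1 i'))
    (hS2disj : ∀ i i', i ≠ i' → Disjoint (S2 i) (S2 i'))
    (hS1cov : Finset.univ.biUnion S1 = Finset.univ)
    (hS2cov : Finset.univ.biUnion S2 = Finset.univ)
    (hint : ∀ (i1 : Fin m1) (i2 : Fin m2), (S1 i1 ∩ S2 i2).card ≤ 1)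
    (T : Matrix (Fin m) (Fin m) ℝ)
    (hTrow : T *ᵥ (fun _ => (1:ℝ)) = 0) :
    ((∀ x ∈ Submodule.span ℝ
        (Set.range fun r : Fin m1 => fun k : Fin m => if k ∈ S1 r then (1:ℝ) else 0),
      ∀ y ∈ Submodule.span ℝ
        (Set.range fun r : Fin m2 => fun k : Fin m => if k ∈ S2 r then (1:ℝ) else 0),
        T *ᵥ (x * y) = (T *ᵥ x) * y + x * (T *ᵥ y)) ↔
      (∀ i j, i ≠ j → T i j ≠ 0 →
        (∃ r, i ∈ S1 r ∧ j ∈ S1 r) ∨ (∃ r, i ∈ S2 r ∧ j ∈ S2 r))) := by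
  constructor
  · intro H i j _ hT
    obtain ⟨a, ha⟩ := exists_mem_of_biUnion_eq_univ hS1cov j
    obtain ⟨b, hb⟩ := exists_mem_of_biUnion_eq_univ hS2cov j
    by_contra! hshare
    exact hT <| apply_eq_zero_of_mulVec_indicator_mul (hint a b) ha hb
      (fun hia => (hshare.1 a hia) ha) (fun hib => (hshare.2 b hib) hb)
      (H _ (Submodule.subset_span ⟨a, rfl⟩) _ (Submodule.subset_span ⟨b, rfl⟩))
  · intro hsupp x hx y hy
    exact mulVec_mul_eq_of_mem_constOnParts hTrow hsupp
      (span_indicator_le_constOnParts (fun r r' => hS1disj r r') hx)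
      (span_indicator_le_constOnParts (fun r r' => hS2disj r r') hy)

/-- The 'derivation' identity `T(x⋄y) = (Tx)⋄y + x⋄(Ty)` on the spans of the indicator
vectors of the two partitions is equivalent to the support condition on `T`. -/
theorem stmt_13 (m m1 m2 : ℕ)
    (S1 : Fin m1 → Finset (Fin m)) (S2 : Fin m2 → Finset (Fin m))
    (hS1ne : ∀ i, (S1 i).Nonempty) (hS2ne : ∀ i, (S2 i).Nonempty)
    (hS1disj : ∀ i i', i ≠ i' → Disjoint (S1 i) (S1 i'))
    (hS2disj : ∀ i i', i ≠ i' → Disjoint (S2 i) (S2 i'))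
    (hS1cov : Finset.univ.biUnion S1 = Finset.univ)
    (hS2cov : Finset.univ.biUnion S2 = Finset.univ)
    (hint : ∀ (i1 : Fin m1) (i2 : Fin m2), (S1 i1 ∩ S2 i2).card ≤ 1)
    (T : Matrix (Fin m) (Fin m) ℝ) (hTsym : T.IsSymm)
    (hTrow : T *ᵥ (fun _ => (1:ℝ)) = 0) :
    ((∀ x ∈ Submodule.span ℝ
        (Set.range fun r : Fin m1 => fun k : Fin m => if k ∈ S1 r then (1:ℝ) else 0),
      ∀ y ∈ Submodule.span ℝ
        (Set.range fun r : Fin m2 => fun k : Fin m => if k ∈ S2 r then (1:ℝ) else 0),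
        T *ᵥ (x * y) = (T *ᵥ x) * y + x * (T *ᵥ y)) ↔
      (∀ i j, i ≠ j → T i j ≠ 0 →
        (∃ r, i ∈ S1 r ∧ j ∈ S1 r) ∨ (∃ r, i ∈ S2 r ∧ j ∈ S2 r))) :=
  stmt_13_general m m1 m2 S1 S2 hS1disj hS2disj hS1cov hS2cov hint T hTrow
end

section
/- Let $\mathfrak{f}$ be a finite-dimensional simple Lie algebra and $\mathfrak{k}$ a Lie subalgebra of $n\mathfrak{f} = \mathfrak{f}^n$ containing the diagonal $\operatorname{diag}(\mathfrak{f}) = \{(X,\dots,X)\}$. Then there is a partition of $\{1,\dots,n\}$ into nonempty blocks $B_1,\dots,B_s$ such that $\mathfrak{k} = \{(Y_1,\dots,Y_n) : Y_i = Y_j \text{ whenever } i, j \text{ lie in the same block}\,,\ Y_i = X_r \text{ for } i \in B_r \text{ with arbitrary } X_1,\dots,X_s \in \mathfrak{f}\}$; i.e., $\mathfrak{k}$ is the direct sum of the diagonals of the sub-sums $\bigoplus_{i \in B_r} \mathfrak{f}$. -/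
/-- The componentwise Lie ring structure on `Fin n → L`. -/
instance piFinLieRing (n : ℕ) (L : Type*) [LieRing L] : LieRing (Fin n → L) :=
  { (inferInstance : AddCommGroup (Fin n → L)) with
    bracket := fun x y k => ⁅x k, y k⁆
    add_lie := fun x y z => funext fun k => add_lie (x k) (y k) (z k)
    lie_add := fun x y z => funext fun k => lie_add (x k) (y k) (z k)
    lie_self := fun x => funext fun k => lie_self (x k)
    leibniz_lie := fun x y z => funext fun k => leibniz_lie (x k) (y k) (z k) }

/-- The componentwise Lie algebra structure on `Fin n → L`. -/
instance piFinLieAlgebra (n : ℕ) (L : Type*) [LieRing L] [LieAlgebra ℝ L] :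
    LieAlgebra ℝ (Fin n → L) :=
  { lie_smul := fun t x y => funext fun k => lie_smul t (x k) (y k) }

/-!
Call coordinates `i`, `j` linked when `W i = W j` for every `W ∈ K`; the blocks are the linking
classes. For a coordinate `i` and a set `S` of coordinates, the values at `i` of the elements of
`K` vanishing on `S` form an ideal of `L`, since `K` is stable under the adjoint action of the
diagonal. For `S = {j}` with `j` not linked to `i` the ideal contains `W i - W j ≠ 0`, so it is
all of `L`; as `⁅L, L⁆ = L` and brackets of elements vanishing on `S` and on `T` vanish on `S ∪ T`,
the same holds for the set of all coordinates not linked to `i`. Hence `K` contains every function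
that is constant on the class of `i` and zero elsewhere, and these add up to any function that is
constant on the classes.
-/

open Finset

theorem LieAlgebra.IsSimple.lie_top_top {R L : Type*} [CommRing R] [LieRing L] [LieAlgebra R L]
    [LieAlgebra.IsSimple R L] : ⁅(⊤ : LieIdeal R L), (⊤ : LieIdeal R L)⁆ = ⊤ := by
  refine (IsSimple.eq_bot_or_eq_top _).resolve_left fun h => IsSimple.non_abelian R (L := L) ?_
  refine ⟨fun x y => ?_⟩
  have := LieSubmodule.lie_mem_lie (LieSubmodule.mem_top (R := R) (L := L) x)
    (LieSubmodule.mem_top (R := R) (L := L) y)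
  rwa [h, LieSubmodule.mem_bot] at this

theorem Setoid.exists_fin_blocks {α : Type*} [Fintype α] [DecidableEq α] (r : Setoid α) :
    ∃ (s : ℕ) (B : Fin s → Finset α),
      (∀ k, (B k).Nonempty) ∧
      (∀ k k', k ≠ k' → Disjoint (B k) (B k')) ∧
      univ.biUnion B = univ ∧
      ∀ a b, (∃ k, a ∈ B k ∧ b ∈ B k) ↔ r a b := by
  classical
  let P := Finpartition.ofSetoid r
  let e : Fin P.parts.card ≃ P.parts := P.parts.equivFin.symm
  refine ⟨_, fun k => e k, fun k => P.nonempty_of_mem_parts (e k).2,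
    fun k k' h => P.disjoint (e k).2 (e k').2 (Subtype.coe_injective.ne (e.injective.ne h)),
    ?_, fun a b => ?_⟩
  · ext a
    obtain ⟨t, ht, hat⟩ := P.exists_mem (mem_univ a)
    simpa using ⟨e.symm ⟨t, ht⟩, by simpa using hat⟩
  · rw [← Finpartition.mem_part_ofSetoid_iff_rel, Finpartition.mem_part_iff_exists]
    constructor
    · rintro ⟨k, hak, hbk⟩
      exact ⟨e k, (e k).2, hbk, hak⟩
    · rintro ⟨t, ht, hbt, hat⟩
      exact ⟨e.symm ⟨t, ht⟩, by simpa using hat, by simpa using hbt⟩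

namespace LieSubalgebra

variable {n : ℕ} {L : Type*} [LieRing L] [LieAlgebra ℝ L] {K : LieSubalgebra ℝ (Fin n → L)}

variable (K) in
def coordSetoid : Setoid (Fin n) where
  r i j := ∀ W ∈ K, W i = W j
  iseqv := ⟨fun _ _ _ => rfl, fun h W hW => (h W hW).symm,
    fun h₁ h₂ W hW => (h₁ W hW).trans (h₂ W hW)⟩

theorem coordSetoid_iff {i j : Fin n} : coordSetoid K i j ↔ ∀ W ∈ K, W i = W j :=
  Iff.rfl

def evalIdealVanishingOn (hdiag : ∀ X : L, (fun _ : Fin n => X) ∈ K) (S : Set (Fin n))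
    (i : Fin n) : LieIdeal ℝ L where
  carrier := {x | ∃ Y ∈ K, (∀ j ∈ S, Y j = 0) ∧ Y i = x}
  add_mem' := by
    rintro _ _ ⟨Y, hY, hYS, rfl⟩ ⟨Z, hZ, hZS, rfl⟩
    exact ⟨Y + Z, K.add_mem hY hZ, fun j hj => by simp [hYS j hj, hZS j hj], rfl⟩
  zero_mem' := ⟨0, K.zero_mem, fun _ _ => rfl, rfl⟩
  smul_mem' := by
    rintro c _ ⟨Y, hY, hYS, rfl⟩
    exact ⟨c • Y, K.smul_mem c hY, fun j hj => by simp [hYS j hj], rfl⟩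
  lie_mem := by
    rintro z _ ⟨Y, hY, hYS, rfl⟩
    exact ⟨⁅fun _ => z, Y⁆, K.lie_mem (hdiag z) hY,
      fun j hj => (congrArg _ (hYS j hj)).trans (lie_zero z), rfl⟩

variable {hdiag : ∀ X : L, (fun _ : Fin n => X) ∈ K}

theorem evalIdealVanishingOn_empty (i : Fin n) : evalIdealVanishingOn hdiag ∅ i = ⊤ :=
  eq_top_iff.mpr fun X _ => ⟨fun _ => X, hdiag X, by simp, rfl⟩

theorem lie_evalIdealVanishingOn_le (S T : Set (Fin n)) (i : Fin n) :
    ⁅evalIdealVanishingOn hdiag S i, evalIdealVanishingOn hdiag T i⁆ ≤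
      evalIdealVanishingOn hdiag (S ∪ T) i := by
  rw [LieSubmodule.lie_le_iff]
  rintro _ ⟨Y, hY, hYS, rfl⟩ _ ⟨Z, hZ, hZT, rfl⟩
  refine ⟨⁅Y, Z⁆, K.lie_mem hY hZ, ?_, rfl⟩
  rintro j (hj | hj)
  · exact (congrArg (⁅·, Z j⁆) (hYS j hj)).trans (zero_lie _)
  · exact (congrArg _ (hZT j hj)).trans (lie_zero _)

variable [LieAlgebra.IsSimple ℝ L]

theorem evalIdealVanishingOn_singleton {i j : Fin n} (hij : ∃ W ∈ K, W i ≠ W j) :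
    evalIdealVanishingOn hdiag {j} i = ⊤ := by
  obtain ⟨W, hW, hWij⟩ := hij
  refine (LieAlgebra.IsSimple.eq_bot_or_eq_top _).resolve_left fun h => hWij ?_
  have hmem : W i - W j ∈ evalIdealVanishingOn hdiag {j} i :=
    ⟨W - fun _ => W j, K.sub_mem hW (hdiag (W j)), by simp, rfl⟩
  rwa [h, LieSubmodule.mem_bot, sub_eq_zero] at hmem

theorem evalIdealVanishingOn_eq_top (i : Fin n) (S : Finset (Fin n))
    (hS : ∀ j ∈ S, ∃ W ∈ K, W i ≠ W j) : evalIdealVanishingOn hdiag S i = ⊤ := by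
  classical
  induction S using Finset.induction with
  | empty => simpa using evalIdealVanishingOn_empty i
  | insert j S _ ih =>
    rw [eq_top_iff, ← LieAlgebra.IsSimple.lie_top_top (R := ℝ)]
    calc ⁅(⊤ : LieIdeal ℝ L), (⊤ : LieIdeal ℝ L)⁆
        = ⁅evalIdealVanishingOn hdiag {j} i, evalIdealVanishingOn hdiag S i⁆ := by
          rw [evalIdealVanishingOn_singleton (hS j (mem_insert_self j S)),
            ih fun k hk => hS k (mem_insert_of_mem hk)]
      _ ≤ evalIdealVanishingOn hdiag (insert j S : Finset (Fin n)) i := by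
          rw [coe_insert, Set.insert_eq]
          exact lie_evalIdealVanishingOn_le _ _ i

theorem exists_mem_eq_on_class_and_zero_off (hdiag : ∀ X : L, (fun _ : Fin n => X) ∈ K)
    (i : Fin n) (X : L) :
    ∃ Y ∈ K, ∀ j, (coordSetoid K i j → Y j = X) ∧ (¬coordSetoid K i j → Y j = 0) := by
  classical
  let S : Finset (Fin n) := univ.filter fun j => ¬coordSetoid K i j
  have hX : X ∈ evalIdealVanishingOn hdiag S i := by
    rw [evalIdealVanishingOn_eq_top i S fun j hj => by simpa [S, coordSetoid_iff] using hj]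
    exact LieSubmodule.mem_top X
  obtain ⟨Y, hY, hYS, rfl⟩ := hX
  exact ⟨Y, hY, fun j => ⟨fun hij => (hij Y hY).symm, fun hij => hYS j (by simpa [S] using hij)⟩⟩

theorem mem_iff_forall_coordSetoid (hdiag : ∀ X : L, (fun _ : Fin n => X) ∈ K)
    {Y : Fin n → L} : Y ∈ K ↔ ∀ i j, coordSetoid K i j → Y i = Y j := by
  classical
  refine ⟨fun hY i j hij => hij Y hY, fun hY => ?_⟩
  choose Z hZK hZ using fun c : Quotient (coordSetoid K) =>
    exists_mem_eq_on_class_and_zero_off hdiag c.out (Y c.out)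
  have hYZ : Y = ∑ c, Z c := by
    funext j
    rw [Finset.sum_apply, Finset.sum_eq_single ⟦j⟧ (fun c _ hc => ?_) (by simp)]
    · rw [(hZ _ j).1 (Quotient.mk_out j)]
      exact (hY _ _ (Quotient.mk_out j)).symm
    · refine (hZ c j).2 fun hcj => hc ?_
      rw [← Quotient.out_eq c]
      exact Quotient.sound hcj
  rw [hYZ]
  exact sum_mem fun c _ => hZK c

end LieSubalgebra

theorem stmt_17_general (n : ℕ) (L : Type*) [LieRing L] [LieAlgebra ℝ L]
    [LieAlgebra.IsSimple ℝ L]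
    (K : LieSubalgebra ℝ (Fin n → L))
    (hdiag : ∀ X : L, (fun _ : Fin n => X) ∈ K) :
    ∃ (s : ℕ) (B : Fin s → Finset (Fin n)),
      (∀ r, (B r).Nonempty) ∧
      (∀ r r', r ≠ r' → Disjoint (B r) (B r')) ∧
      (Finset.univ.biUnion B = Finset.univ) ∧
      (K : Set (Fin n → L)) =
        {Y : Fin n → L | ∀ (r : Fin s) (i j : Fin n), i ∈ B r → j ∈ B r → Y i = Y j} := by
  obtain ⟨s, B, hne, hdisj, hcover, hB⟩ := K.coordSetoid.exists_fin_blocks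
  refine ⟨s, B, hne, hdisj, hcover, Set.ext fun Y => ?_⟩
  simp only [SetLike.mem_coe, K.mem_iff_forall_coordSetoid hdiag, ← hB, Set.mem_ofPred_eq]
  exact ⟨fun h r i j hi hj => h i j ⟨r, hi, hj⟩, fun h i j ⟨r, hi, hj⟩ => h r i j hi hj⟩

/-- Lemma 2.5: every Lie subalgebra of `n𝔣` containing the diagonal is the
block-diagonal subalgebra associated with a partition of `{1,…,n}`. -/
theorem stmt_17 (n : ℕ) (L : Type*) [LieRing L] [LieAlgebra ℝ L]
    [Module.Finite ℝ L] [LieAlgebra.IsSimple ℝ L]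
    (K : LieSubalgebra ℝ (Fin n → L))
    (hdiag : ∀ X : L, (fun _ : Fin n => X) ∈ K) :
    ∃ (s : ℕ) (B : Fin s → Finset (Fin n)),
      (∀ r, (B r).Nonempty) ∧
      (∀ r r', r ≠ r' → Disjoint (B r) (B r')) ∧
      (Finset.univ.biUnion B = Finset.univ) ∧
      (K : Set (Fin n → L)) =
        {Y : Fin n → L | ∀ (r : Fin s) (i j : Fin n), i ∈ B r → j ∈ B r → Y i = Y j} :=
  stmt_17_general n L K hdiag
end

section
/- Let $E_1, E_2, E_3$ span a copy of $\mathfrak{su}(2)$ with $[E_1,E_2]=E_3$, $[E_2,E_3]=E_1$, $[E_3,E_1]=E_2$, inside a compact simple Lie algebra $\mathfrak{f}$. Suppose real numbers $\gamma_i, \gamma_j, \gamma_k$ (positive) and $a^j_i, a^k_i, a^i_j, a^k_j, a^i_k, a^j_k$ and an element $Z_0 \in \mathfrak{f}$ satisfy: $-(\gamma_i-\gamma_j)a^j_i E_3 + (\gamma_i-\gamma_k)a^k_i E_2 + \gamma_i[Z_0,E_1] = 0$, $-(\gamma_j-\gamma_k)a^k_j E_1 + (\gamma_j-\gamma_i)a^i_j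 E_3 + \gamma_j[Z_0,E_2] = 0$, $-(\gamma_k-\gamma_i)a^i_k E_2 + (\gamma_k-\gamma_j)a^j_k E_1 + \gamma_k[Z_0,E_3] = 0$. Then $Z_0$ lies in the normalizer of $\operatorname{Span}(E_1,E_2,E_3)$ in $\mathfrak{f}$, and writing $Z_0 = d_1E_1 + d_2E_2 + d_3E_3 + Z_0'$ with $Z_0'$ in the centralizer of $\operatorname{Span}(E_1,E_2,E_3)$, one obtains $(\gamma_j - \gamma_i) a^i_j = -\gamma_j d_1$ and $(\gamma_k - \gamma_i) a^i_k = -\gamma_k d_1$; in particular $(1 - \gamma_i/\gamma_j) a^i_j = (1 - \gamma_i/\gamma_k) a^i_k$. -/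
/-! Each equation expresses `γ • ⁅Z₀, Eₗ⁆` as a combination of the other two `Eₘ`, so `Z₀`
normalizes the span. After substituting `Z₀ = d₁E₁ + d₂E₂ + d₃E₃ + Z₀'`, the brackets become
`⁅Z₀, E₂⁆ = d₁E₃ - d₃E₁` and `⁅Z₀, E₃⁆ = d₂E₁ - d₁E₂`; comparing the `E₃`-coefficient of the
second equation and the `E₂`-coefficient of the third (linear independence) gives the identities. -/

open Submodule

section LieSpan

variable {R L : Type*} [CommRing R] [LieRing L] [LieAlgebra R L]

theorem lie_mem_span_of_forall_lie_mem {s : Set L} {z w : L}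
    (hs : ∀ x ∈ s, ⁅z, x⁆ ∈ span R s) (hw : w ∈ span R s) : ⁅z, w⁆ ∈ span R s :=
  (span_le (p := (span R s).comap (LieAlgebra.ad R L z))).mpr hs hw

variable {E1 E2 E3 Z' : L} (d1 d2 d3 : R)

theorem lie_decomposition_second_of_su2_brackets (h12 : ⁅E1, E2⁆ = E3) (h23 : ⁅E2, E3⁆ = E1)
    (hZ' : ⁅Z', E2⁆ = 0) :
    ⁅d1 • E1 + d2 • E2 + d3 • E3 + Z', E2⁆ = d1 • E3 - d3 • E1 := by
  have h32 : ⁅E3, E2⁆ = -E1 := by rw [← lie_skew, h23]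
  simp only [add_lie, smul_lie, h12, h32, lie_self, hZ', smul_zero, add_zero, smul_neg]
  abel

theorem lie_decomposition_third_of_su2_brackets (h23 : ⁅E2, E3⁆ = E1) (h31 : ⁅E3, E1⁆ = E2)
    (hZ' : ⁅Z', E3⁆ = 0) :
    ⁅d1 • E1 + d2 • E2 + d3 • E3 + Z', E3⁆ = d2 • E1 - d1 • E2 := by
  have h13 : ⁅E1, E3⁆ = -E2 := by rw [← lie_skew, h31]
  simp only [add_lie, smul_lie, h23, h13, lie_self, hZ', smul_zero, add_zero, smul_neg]
  abel

end LieSpan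

theorem Submodule.mem_of_add_smul_eq_zero {K V : Type*} [Field K] [AddCommGroup V] [Module K V]
    {p : Submodule K V} {c : K} {x y : V} (hc : c ≠ 0) (hy : y ∈ p) (h : y + c • x = 0) :
    x ∈ p := by
  rw [← p.smul_mem_iff hc, eq_neg_of_add_eq_zero_right h]
  exact p.neg_mem hy

theorem LinearIndependent.eq_zero_of_smul_add_smul_add_smul {R M : Type*} [Ring R]
    [AddCommGroup M] [Module R M] {x y z : M} (hv : LinearIndependent R ![x, y, z])
    {a b c : R} (h : a • x + b • y + c • z = 0) : a = 0 ∧ b = 0 ∧ c = 0 := by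
  have := Fintype.linearIndependent_iff.mp hv ![a, b, c]
    (by simpa [Fin.sum_univ_three, add_assoc] using h)
  exact ⟨this 0, this 1, this 2⟩

theorem one_sub_div_mul_eq_neg {K : Type*} [Field K] {γ γ' a d : K} (hγ : γ ≠ 0)
    (h : (γ - γ') * a = -(γ * d)) : (1 - γ' / γ) * a = -d := by
  field_simp
  linear_combination h

theorem stmt_18_general (F : Type*) [LieRing F] [LieAlgebra ℝ F]
    (E1 E2 E3 : F) (hE : LinearIndependent ℝ ![E1, E2, E3])
    (h12 : ⁅E1, E2⁆ = E3) (h23 : ⁅E2, E3⁆ = E1) (h31 : ⁅E3, E1⁆ = E2)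
    (γi γj γk : ℝ) (hγi : 0 < γi) (hγj : 0 < γj) (hγk : 0 < γk)
    (aji aki aij akj aik ajk : ℝ) (Z0 : F)
    (eq1 : -((γi - γj) * aji) • E3 + ((γi - γk) * aki) • E2 + γi • ⁅Z0, E1⁆ = 0)
    (eq2 : -((γj - γk) * akj) • E1 + ((γj - γi) * aij) • E3 + γj • ⁅Z0, E2⁆ = 0)
    (eq3 : -((γk - γi) * aik) • E2 + ((γk - γj) * ajk) • E1 + γk • ⁅Z0, E3⁆ = 0) :
    (∀ W ∈ Submodule.span ℝ {E1, E2, E3}, ⁅Z0, W⁆ ∈ Submodule.span ℝ {E1, E2, E3}) ∧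
    (∀ (d1 d2 d3 : ℝ) (Z0' : F),
      Z0 = d1 • E1 + d2 • E2 + d3 • E3 + Z0' →
      ⁅Z0', E1⁆ = 0 → ⁅Z0', E2⁆ = 0 → ⁅Z0', E3⁆ = 0 →
      (γj - γi) * aij = -(γj * d1) ∧ (γk - γi) * aik = -(γk * d1) ∧
        (1 - γi / γj) * aij = (1 - γi / γk) * aik) := by
  set S := span ℝ ({E1, E2, E3} : Set F)
  have hE1 : E1 ∈ S := subset_span (by simp)
  have hE2 : E2 ∈ S := subset_span (by simp)
  have hE3 : E3 ∈ S := subset_span (by simp)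
  refine ⟨fun W hW => lie_mem_span_of_forall_lie_mem ?_ hW, ?_⟩
  · rintro x (rfl | rfl | rfl)
    · exact mem_of_add_smul_eq_zero hγi.ne' (add_mem (smul_mem _ _ hE3) (smul_mem _ _ hE2)) eq1
    · exact mem_of_add_smul_eq_zero hγj.ne' (add_mem (smul_mem _ _ hE1) (smul_mem _ _ hE3)) eq2
    · exact mem_of_add_smul_eq_zero hγk.ne' (add_mem (smul_mem _ _ hE2) (smul_mem _ _ hE1)) eq3
  · rintro d1 d2 d3 Z0' rfl - hc2 hc3
    rw [lie_decomposition_second_of_su2_brackets d1 d2 d3 h12 h23 hc2] at eq2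
    rw [lie_decomposition_third_of_su2_brackets d1 d2 d3 h23 h31 hc3] at eq3
    have hj : (γj - γi) * aij + γj * d1 = 0 :=
      (hE.eq_zero_of_smul_add_smul_add_smul (a := -((γj - γk) * akj) - γj * d3) (b := 0)
        (by linear_combination (norm := module) eq2)).2.2
    have hk : (γk - γi) * aik + γk * d1 = 0 :=
      (hE.eq_zero_of_smul_add_smul_add_smul (a := -((γk - γj) * ajk) - γk * d2) (c := 0)
        (by linear_combination (norm := module) -eq3)).2.1
    have ej : (γj - γi) * aij = -(γj * d1) := by linarith
    have ek : (γk - γi) * aik = -(γk * d1) := by linarith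
    refine ⟨ej, ek, ?_⟩
    rw [one_sub_div_mul_eq_neg hγj.ne' ej, one_sub_div_mul_eq_neg hγk.ne' ek]

/-- The `𝔰𝔲(2)` computation in the proof of Theorem 4.1: from the three equations it
follows that `Z₀` normalizes `Span(E₁,E₂,E₃)`, and for any decomposition
`Z₀ = d₁E₁ + d₂E₂ + d₃E₃ + Z₀'` with `Z₀'` centralizing the span one gets
`(γⱼ-γᵢ)aⁱⱼ = -γⱼd₁`, `(γₖ-γᵢ)aⁱₖ = -γₖd₁`, hence
`(1-γᵢ/γⱼ)aⁱⱼ = (1-γᵢ/γₖ)aⁱₖ`. -/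
theorem stmt_18 (F : Type*) [LieRing F] [LieAlgebra ℝ F]
    [Module.Finite ℝ F] [LieAlgebra.IsSimple ℝ F]
    (E1 E2 E3 : F) (hE : LinearIndependent ℝ ![E1, E2, E3])
    (h12 : ⁅E1, E2⁆ = E3) (h23 : ⁅E2, E3⁆ = E1) (h31 : ⁅E3, E1⁆ = E2)
    (γi γj γk : ℝ) (hγi : 0 < γi) (hγj : 0 < γj) (hγk : 0 < γk)
    (aji aki aij akj aik ajk : ℝ) (Z0 : F)
    (eq1 : -((γi - γj) * aji) • E3 + ((γi - γk) * aki) • E2 + γi • ⁅Z0, E1⁆ = 0)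
    (eq2 : -((γj - γk) * akj) • E1 + ((γj - γi) * aij) • E3 + γj • ⁅Z0, E2⁆ = 0)
    (eq3 : -((γk - γi) * aik) • E2 + ((γk - γj) * ajk) • E1 + γk • ⁅Z0, E3⁆ = 0) :
    (∀ W ∈ Submodule.span ℝ {E1, E2, E3}, ⁅Z0, W⁆ ∈ Submodule.span ℝ {E1, E2, E3}) ∧
    (∀ (d1 d2 d3 : ℝ) (Z0' : F),
      Z0 = d1 • E1 + d2 • E2 + d3 • E3 + Z0' →
      ⁅Z0', E1⁆ = 0 → ⁅Z0', E2⁆ = 0 → ⁅Z0', E3⁆ = 0 →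
      (γj - γi) * aij = -(γj * d1) ∧ (γk - γi) * aik = -(γk * d1) ∧
        (1 - γi / γj) * aij = (1 - γi / γk) * aik) :=
  stmt_18_general F E1 E2 E3 hE h12 h23 h31 γi γj γk hγi hγj hγk aji aki aij akj aik ajk Z0 eq1 eq2
    eq3
end
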